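/- arXiv:1702.07966 — 10 statements merged into one kernel-verified Lean document; each statement's English description precedes it below -/
import Mathlib

section
/- Fix a nonzero vector v ∈ ℝ^m. The function u ↦ g(u,v) is differentiable at every u ≠ 0, and its gradient at such u equals (1/(2π))·‖v‖·(u/‖u‖)·sin θ_{u,v} + (1/(2π))·(π − θ_{u,v})·v. -/
open scoped RealInnerProductSpace
open InnerProductGeometry Real

/-- The ReLU function `σ(z) = max{z, 0}`. -/
noncomputable def relu (z : ℝ) : ℝ := max z 0

/-- `g u v = (1/(2π))·‖u‖·‖v‖·(sin θ_{u,v} + (π − θ_{u,v})·cos θ_{u,v})`. -/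
noncomputable def g {E : Type*} [NormedAddCommGroup E] [InnerProductSpace ℝ E]
    (u v : E) : ℝ :=
  (1 / (2 * π)) * ‖u‖ * ‖v‖ *
    (Real.sin (angle u v) + (π - angle u v) * Real.cos (angle u v))

/-!
Write `2π · g w v = ‖w‖‖v‖ sin θ + (π - θ)⟪w, v⟫` with `θ = θ_{w,v}`. When `0 < θ_{u,v} < π` the
angle is differentiable at `u`, and its derivative enters with the coefficient
`‖u‖‖v‖ cos θ - ⟪u, v⟫ = 0`, which leaves the stated gradient.

When `θ_{u,v} = π` we have `g u v = 0`, and for `w` near `u`, with `φ = π - θ_{w,v}` small,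
`|g w v| ≤ (1/2π)‖v‖ φ · ‖w‖ sin φ ≤ (1/2π)‖v‖ φ ‖w - u‖` since `‖w‖ sin φ` is the distance
from `w` to the line `ℝ v ∋ u`; so `g · v` has derivative `0` at `u`.
The case `θ_{u,v} = 0` reduces to this one through `g w v - g w (-v) = ⟪w, v⟫ / 2`.
-/

open Filter Topology Asymptotics

namespace Real

theorem mul_cos_le_sin {x : ℝ} (h0 : 0 ≤ x) (h1 : x ≤ π / 2) : x * cos x ≤ sin x := by
  rcases h1.lt_or_eq with hlt | rfl
  · have hcos : 0 < cos x := cos_pos_of_mem_Ioo ⟨by linarith, hlt⟩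
    simpa only [tan_eq_sin_div_cos, le_div_iff₀ hcos] using le_tan h0 hlt
  · simp

theorem abs_sin_add_pi_sub_mul_cos_le {θ : ℝ} (h1 : π / 2 ≤ θ) (h2 : θ ≤ π) :
    |sin θ + (π - θ) * cos θ| ≤ (π - θ) * sin θ := by
  obtain ⟨φ, rfl⟩ : ∃ φ, θ = π - φ := ⟨π - θ, by ring⟩
  rw [sin_pi_sub, cos_pi_sub, sub_sub_cancel]
  have hφ0 : 0 ≤ φ := by linarith
  have hφ : φ ≤ π / 2 := by linarith
  have hc : 0 ≤ cos φ := cos_nonneg_of_mem_Icc ⟨by linarith, hφ⟩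
  have hs : 0 ≤ sin φ := sin_nonneg_of_nonneg_of_le_pi hφ0 (by linarith)
  have h_one_sub_cos : 1 - cos φ ≤ sin φ := by nlinarith [cos_sq_add_sin_sq φ]
  rw [abs_of_nonneg (by linarith [mul_cos_le_sin hφ0 hφ])]
  nlinarith [sin_le hφ0]

end Real

section

variable {E : Type*} [NormedAddCommGroup E] [InnerProductSpace ℝ E]

theorem hasFDerivAt_norm_of_ne_zero {x : E} (hx : x ≠ 0) :
    HasFDerivAt (‖·‖) (‖x‖⁻¹ • innerSL ℝ x) x := by
  have h := (hasStrictFDerivAt_norm_sq x).hasFDerivAt.sqrt (by positivity)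
  simp only [sqrt_sq (norm_nonneg _)] at h
  convert h using 1
  ext y
  simp only [smul_apply, innerSL_apply_apply, smul_eq_mul, nsmul_eq_mul,
    Nat.cast_ofNat]
  field_simp

theorem norm_mul_sin_angle_le_norm_sub_smul (w v : E) (t : ℝ) :
    ‖w‖ * sin (angle w v) ≤ ‖w - t • v‖ := by
  rcases eq_or_ne v 0 with rfl | hv
  · simp
  have hv' : 0 < ‖v‖ := norm_pos_iff.2 hv
  have hgram : ⟪w, w⟫ * ⟪v, v⟫ - ⟪w, v⟫ * ⟪w, v⟫ ≤ (‖w - t • v‖ * ‖v‖) ^ 2 := by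
    rw [mul_pow, ← real_inner_self_eq_norm_sq, ← real_inner_self_eq_norm_sq]
    simp only [inner_sub_left, inner_sub_right, real_inner_smul_left, real_inner_smul_right,
      real_inner_comm w v]
    nlinarith [sq_nonneg (t * ⟪v, v⟫ - ⟪w, v⟫)]
  refine le_of_mul_le_mul_right ?_ hv'
  calc ‖w‖ * sin (angle w v) * ‖v‖ = sin (angle w v) * (‖w‖ * ‖v‖) := by ring
    _ = √(⟪w, w⟫ * ⟪v, v⟫ - ⟪w, v⟫ * ⟪w, v⟫) := sin_angle_mul_norm_mul_norm w v
    _ ≤ √((‖w - t • v‖ * ‖v‖) ^ 2) := sqrt_le_sqrt hgram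
    _ = ‖w - t • v‖ * ‖v‖ := sqrt_sq (by positivity)

theorem differentiableAt_angle_left {u v : E} (hu : u ≠ 0) (hv : v ≠ 0) (h0 : angle u v ≠ 0)
    (hπ : angle u v ≠ π) : DifferentiableAt ℝ (fun w => angle w v) u := by
  have hcos : ⟪u, v⟫ / (‖u‖ * ‖v‖) ≠ -1 ∧ ⟪u, v⟫ / (‖u‖ * ‖v‖) ≠ 1 := by
    refine ⟨fun h => hπ ?_, fun h => h0 ?_⟩
    · rw [angle, h, arccos_neg_one]
    · rw [angle, h, arccos_one]
  have hnum : DifferentiableAt ℝ (fun w : E => ⟪w, v⟫) u :=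
    differentiableAt_id.inner ℝ (differentiableAt_const v)
  have hden : DifferentiableAt ℝ (fun w : E => ‖w‖ * ‖v‖) u :=
    (differentiableAt_id.norm ℝ hu).mul_const _
  have hquot : DifferentiableAt ℝ (fun w => ⟪w, v⟫ / (‖w‖ * ‖v‖)) u := by
    simpa only [div_eq_mul_inv] using hnum.fun_mul (hden.fun_inv (by positivity))
  exact (differentiableAt_arccos.2 hcos).comp u hquot

theorem g_eq_inner (w v : E) :
    g w v = 1 / (2 * π) * (‖w‖ * ‖v‖ * sin (angle w v) + (π - angle w v) * ⟪w, v⟫) := by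
  rw [g, ← cos_angle_mul_norm_mul_norm]
  ring

theorem g_sub_g_neg_right (w v : E) : g w v - g w (-v) = ⟪w, v⟫ / 2 := by
  rw [g_eq_inner, g_eq_inner, angle_neg_right, norm_neg, inner_neg_right, sin_pi_sub]
  field_simp
  ring

theorem hasFDerivAt_g_left_of_angle_ne {u v : E} (hu : u ≠ 0) (hv : v ≠ 0)
    (h0 : angle u v ≠ 0) (hπ : angle u v ≠ π) :
    HasFDerivAt (fun w => g w v) (innerSL ℝ ((1 / (2 * π) * ‖v‖ * sin (angle u v) / ‖u‖) • u
      + (1 / (2 * π) * (π - angle u v)) • v)) u := by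
  obtain ⟨θ', hθ⟩ := differentiableAt_angle_left hu hv h0 hπ
  have hinner := (hasFDerivAt_id u).inner ℝ (hasFDerivAt_const v u)
  have H := ((((hasFDerivAt_norm_of_ne_zero hu).mul_const ‖v‖).mul hθ.sin).add
    ((hθ.const_sub π).mul hinner)).const_mul (1 / (2 * π))
  rw [show (fun w => g w v) = _ from funext fun w => g_eq_inner w v]
  refine H.congr_fderiv ?_
  ext h
  simp only [smul_add, add_apply, smul_apply, smul_eq_mul, neg_apply, innerSL_apply_apply,
    ContinuousLinearMap.comp_apply, ContinuousLinearMap.prod_apply, ContinuousLinearMap.id_apply,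
    zero_apply, fderivInnerCLM_apply, inner_zero_right, id_eq, real_inner_smul_left,
    inner_add_left]
  rw [← cos_angle_mul_norm_mul_norm u v, real_inner_comm v h]
  field_simp
  ring

theorem hasFDerivAt_g_left_of_angle_eq_pi {u v : E} (h : angle u v = π) :
    HasFDerivAt (fun w => g w v) (0 : E →L[ℝ] ℝ) u := by
  obtain ⟨hu, r, hr, rfl⟩ := angle_eq_pi_iff.1 h
  set v := r • u
  have hangle : Tendsto (fun w => angle w v) (𝓝 u) (𝓝 π) := by
    rw [← h]
    exact (continuousAt_angle (x := (u, v)) hu (smul_ne_zero hr.ne hu)).comp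
      (f := fun w => (w, v)) (by fun_prop)
  set k := fun w => 1 / (2 * π) * ‖v‖ * (π - angle w v)
  have hk : Tendsto k (𝓝 u) (𝓝 0) := by
    simpa [k] using (hangle.const_sub π).const_mul (1 / (2 * π) * ‖v‖)
  have hbound : ∀ᶠ w in 𝓝 u, |g w v| ≤ k w * ‖w - u‖ := by
    filter_upwards [hangle.eventually (le_mem_nhds (by linarith [pi_pos] : π / 2 < π))] with w hw
    have hk0 : 0 ≤ k w := mul_nonneg (by positivity) (sub_nonneg.2 (angle_le_pi w v))
    have hsin : ‖w‖ * sin (angle w v) ≤ ‖w - u‖ := by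
      simpa [v, smul_smul, inv_mul_cancel₀ hr.ne] using
        norm_mul_sin_angle_le_norm_sub_smul w v r⁻¹
    calc |g w v| = 1 / (2 * π) * ‖v‖ * (‖w‖ *
          |sin (angle w v) + (π - angle w v) * cos (angle w v)|) := by
          rw [g, abs_mul, abs_of_nonneg (by positivity)]; ring
      _ ≤ 1 / (2 * π) * ‖v‖ * (‖w‖ * ((π - angle w v) * sin (angle w v))) := by
          gcongr; exact abs_sin_add_pi_sub_mul_cos_le hw (angle_le_pi w v)
      _ = k w * (‖w‖ * sin (angle w v)) := by ring
      _ ≤ k w * ‖w - u‖ := mul_le_mul_of_nonneg_left hsin hk0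
  have hgu : g u v = 0 := by simp [g, h]
  rw [hasFDerivAt_iff_isLittleO, hgu]
  refine isLittleO_iff.2 fun c hc => ?_
  filter_upwards [hbound, hk.eventually (ge_mem_nhds hc)] with w hw hkc
  simpa using hw.trans (mul_le_mul_of_nonneg_right hkc (norm_nonneg _))

theorem hasFDerivAt_g_left_of_angle_eq_zero {u v : E} (h : angle u v = 0) :
    HasFDerivAt (fun w => g w v) (innerSL ℝ ((1 / 2 : ℝ) • v)) u := by
  have hπ : angle u (-v) = π := by rw [angle_neg_right, h, sub_zero]
  have H := (hasFDerivAt_g_left_of_angle_eq_pi hπ).add (innerSL ℝ ((1 / 2 : ℝ) • v)).hasFDerivAt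
  rw [zero_add] at H
  refine H.congr_of_eventuallyEq (Eventually.of_forall fun w => ?_)
  simp only [Pi.add_apply, innerSL_apply_apply, real_inner_smul_left, real_inner_comm w v]
  linarith [g_sub_g_neg_right w v]

end

/-- For fixed nonzero `v ∈ ℝ^m`, the function `u ↦ g u v` is differentiable at every `u ≠ 0`
with gradient `(1/(2π))·‖v‖·(u/‖u‖)·sin θ_{u,v} + (1/(2π))·(π − θ_{u,v})·v`. -/
theorem stmt1 (m : ℕ) (v : EuclideanSpace ℝ (Fin m)) (hv : v ≠ 0)
    (u : EuclideanSpace ℝ (Fin m)) (hu : u ≠ 0) :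
    HasGradientAt (fun w : EuclideanSpace ℝ (Fin m) => g w v)
      (((1 / (2 * π)) * ‖v‖ * Real.sin (angle u v) / ‖u‖) • u
        + ((1 / (2 * π)) * (π - angle u v)) • v) u := by
  rw [hasGradientAt_iff_hasFDerivAt]
  by_cases h0 : angle u v = 0
  · have hgrad : ((1 / (2 * π)) * ‖v‖ * Real.sin (angle u v) / ‖u‖) • u
        + ((1 / (2 * π)) * (π - angle u v)) • v = (1 / 2 : ℝ) • v := by
      rw [h0, sin_zero, mul_zero, zero_div, zero_smul, zero_add, sub_zero]
      field_simp
    rw [hgrad]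
    exact hasFDerivAt_g_left_of_angle_eq_zero h0
  by_cases hπ : angle u v = π
  · have hgrad : ((1 / (2 * π)) * ‖v‖ * Real.sin (angle u v) / ‖u‖) • u
        + ((1 / (2 * π)) * (π - angle u v)) • v = 0 := by
      simp [hπ]
    rw [hgrad, map_zero]
    exact hasFDerivAt_g_left_of_angle_eq_pi hπ
  exact hasFDerivAt_g_left_of_angle_ne hu hv h0 hπ
end

section
/- Let k ≥ 1, m ≥ 2, and let w* ∈ ℝ^m be nonzero. The no-overlap population loss ℓ is differentiable at a point w ∈ ℝ^m if and only if w ≠ 0. -/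
open scoped RealInnerProductSpace
open InnerProductGeometry Real

section Aux

set_option linter.unreachableTactic false
set_option linter.unusedTactic false

variable {E : Type*} [NormedAddCommGroup E] [InnerProductSpace ℝ E]

lemma g_eq (w ws : E) :
    g w ws = (1 / (2 * π)) *
      (‖w‖ * ‖ws‖ * Real.sin (angle w ws) + (π - angle w ws) * ⟪w, ws⟫) := by
  unfold g
  rw [← cos_angle_mul_norm_mul_norm w ws]
  ring

-- A(c•ws + h) ≤ ‖ws‖^2 * ‖h‖^2
lemma A_par_bound (ws h : E) (c : ℝ) :
    ⟪c • ws + h, c • ws + h⟫ * ⟪ws, ws⟫ - ⟪c • ws + h, ws⟫ * ⟪c • ws + h, ws⟫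
      ≤ ‖ws‖ ^ 2 * ‖h‖ ^ 2 := by
  have e1 : ⟪c • ws + h, c • ws + h⟫
      = c * c * ⟪ws, ws⟫ + 2 * c * ⟪ws, h⟫ + ⟪h, h⟫ := by
    simp only [inner_add_left, inner_add_right, real_inner_smul_left, real_inner_smul_right,
      real_inner_comm h ws]
    ring
  have e2 : ⟪c • ws + h, ws⟫ = c * ⟪ws, ws⟫ + ⟪ws, h⟫ := by
    simp [inner_add_left, real_inner_smul_left, real_inner_comm h ws]
  rw [e1, e2, real_inner_self_eq_norm_sq, real_inner_self_eq_norm_sq]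
  nlinarith [sq_nonneg (⟪ws, h⟫ : ℝ)]

-- √A = ‖w‖‖ws‖ sin θ  and its bound at parallel points
lemma norm_mul_sin (w ws : E) :
    ‖w‖ * ‖ws‖ * Real.sin (angle w ws)
      = Real.sqrt (⟪w, w⟫ * ⟪ws, ws⟫ - ⟪w, ws⟫ * ⟪w, ws⟫) := by
  rw [← sin_angle_mul_norm_mul_norm w ws]; ring

lemma scalar_est {θ : ℝ} (h0 : 0 ≤ θ) (hπ : θ ≤ π) (hc : 0 ≤ Real.cos θ) :
    |Real.sin θ - θ * Real.cos θ| ≤ Real.sin θ ^ 3 := by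
  have hs : 0 ≤ Real.sin θ := Real.sin_nonneg_of_nonneg_of_le_pi h0 hπ
  have hs1 : Real.sin θ ≤ θ := Real.sin_le h0
  have hc1 : Real.cos θ ≤ 1 := Real.cos_le_one θ
  have hpyth : Real.sin θ ^ 2 + Real.cos θ ^ 2 = 1 := Real.sin_sq_add_cos_sq θ
  have hupper : Real.sin θ - θ * Real.cos θ ≤ Real.sin θ ^ 3 := by
    nlinarith [mul_nonneg hc (sub_nonneg.2 hs1), mul_nonneg (mul_nonneg hc hs) (sub_nonneg.2 hc1)]
  have hlower : 0 ≤ Real.sin θ - θ * Real.cos θ := by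
    rcases eq_or_lt_of_le h0 with h | h
    · simp [← h]
    rcases eq_or_lt_of_le hc with h' | h'
    · nlinarith
    · have hθlt : θ < π / 2 := by
        by_contra hge
        push_neg at hge
        have := Real.cos_nonpos_of_pi_div_two_le_of_le hge (by linarith [Real.pi_pos])
        linarith
      have := Real.lt_tan h hθlt
      rw [Real.tan_eq_sin_div_cos, lt_div_iff₀ h'] at this
      linarith
  rw [abs_of_nonneg hlower]
  exact hupper

lemma rem_pos (w ws : E) (hpos : 0 ≤ ⟪w, ws⟫) :
    |‖w‖ * ‖ws‖ * Real.sin (angle w ws) - angle w ws * ⟪w, ws⟫|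
      ≤ ‖w‖ * ‖ws‖ * Real.sin (angle w ws) ^ 3 := by
  set θ := angle w ws with hθ
  have hN : 0 ≤ ‖w‖ * ‖ws‖ := by positivity
  have hinner : Real.cos θ * (‖w‖ * ‖ws‖) = ⟪w, ws⟫ := cos_angle_mul_norm_mul_norm w ws
  rcases eq_or_lt_of_le hN with h0 | h0
  · have : (⟪w, ws⟫ : ℝ) = 0 := by rw [← hinner, ← h0]; ring
    rw [this, ← h0]; simp
  · have hc : 0 ≤ Real.cos θ := by
      by_contra hcn
      push_neg at hcn
      nlinarith
    have key := scalar_est (angle_nonneg w ws) (angle_le_pi w ws) hc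
    calc |‖w‖ * ‖ws‖ * Real.sin θ - θ * ⟪w, ws⟫|
        = (‖w‖ * ‖ws‖) * |Real.sin θ - θ * Real.cos θ| := by
          rw [← hinner, show ‖w‖ * ‖ws‖ * Real.sin θ - θ * (Real.cos θ * (‖w‖ * ‖ws‖))
            = (‖w‖ * ‖ws‖) * (Real.sin θ - θ * Real.cos θ) by ring, abs_mul, abs_of_pos h0]
      _ ≤ (‖w‖ * ‖ws‖) * Real.sin θ ^ 3 := by
          exact mul_le_mul_of_nonneg_left key hN
      _ = ‖w‖ * ‖ws‖ * Real.sin θ ^ 3 := by ring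

lemma rem_neg (w ws : E) (hneg : ⟪w, ws⟫ ≤ 0) :
    |‖w‖ * ‖ws‖ * Real.sin (angle w ws) + (π - angle w ws) * ⟪w, ws⟫|
      ≤ ‖w‖ * ‖ws‖ * Real.sin (angle w ws) ^ 3 := by
  set θ := angle w ws with hθ
  have hN : 0 ≤ ‖w‖ * ‖ws‖ := by positivity
  have hinner : Real.cos θ * (‖w‖ * ‖ws‖) = ⟪w, ws⟫ := cos_angle_mul_norm_mul_norm w ws
  rcases eq_or_lt_of_le hN with h0 | h0
  · have : (⟪w, ws⟫ : ℝ) = 0 := by rw [← hinner, ← h0]; ring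
    rw [this, ← h0]; simp
  · have hc : Real.cos θ ≤ 0 := by
      by_contra hcn
      push_neg at hcn
      nlinarith
    have hcφ : 0 ≤ Real.cos (π - θ) := by rw [Real.cos_pi_sub]; linarith
    have key := scalar_est (θ := π - θ) (by linarith [angle_le_pi w ws])
      (by linarith [angle_nonneg w ws]) hcφ
    rw [Real.sin_pi_sub, Real.cos_pi_sub] at key
    calc |‖w‖ * ‖ws‖ * Real.sin θ + (π - θ) * ⟪w, ws⟫|
        = (‖w‖ * ‖ws‖) * |Real.sin θ - (π - θ) * -Real.cos θ| := by
          rw [← hinner, show ‖w‖ * ‖ws‖ * Real.sin θ + (π - θ) * (Real.cos θ * (‖w‖ * ‖ws‖))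
            = (‖w‖ * ‖ws‖) * (Real.sin θ - (π - θ) * -Real.cos θ) by ring, abs_mul, abs_of_pos h0]
      _ ≤ (‖w‖ * ‖ws‖) * Real.sin θ ^ 3 := mul_le_mul_of_nonneg_left key hN
      _ = ‖w‖ * ‖ws‖ * Real.sin θ ^ 3 := by ring

lemma cube_bound (ws h : E) (c : ℝ) (hne : c • ws + h ≠ 0) (hws : ws ≠ 0) :
    ‖c • ws + h‖ * ‖ws‖ * Real.sin (angle (c • ws + h) ws) ^ 3
      ≤ (‖ws‖ * ‖h‖) ^ 3 / (‖c • ws + h‖ * ‖ws‖) ^ 2 := by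
  set w := c • ws + h with hw
  have hN : 0 < ‖w‖ * ‖ws‖ := mul_pos (norm_pos_iff.2 hne) (norm_pos_iff.2 hws)
  have hs : 0 ≤ Real.sin (angle w ws) :=
    Real.sin_nonneg_of_nonneg_of_le_pi (angle_nonneg w ws) (angle_le_pi w ws)
  have hNs : ‖w‖ * ‖ws‖ * Real.sin (angle w ws) ≤ ‖ws‖ * ‖h‖ := by
    rw [norm_mul_sin w ws]
    calc Real.sqrt (⟪w, w⟫ * ⟪ws, ws⟫ - ⟪w, ws⟫ * ⟪w, ws⟫)
        ≤ Real.sqrt (‖ws‖ ^ 2 * ‖h‖ ^ 2) := Real.sqrt_le_sqrt (A_par_bound ws h c)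
      _ = ‖ws‖ * ‖h‖ := by
          rw [show ‖ws‖ ^ 2 * ‖h‖ ^ 2 = (‖ws‖ * ‖h‖) ^ 2 by ring]
          exact Real.sqrt_sq (by positivity)
  have heq : ‖w‖ * ‖ws‖ * Real.sin (angle w ws) ^ 3
      = (‖w‖ * ‖ws‖ * Real.sin (angle w ws)) ^ 3 / (‖w‖ * ‖ws‖) ^ 2 := by
    field_simp
  rw [heq]
  gcongr
  all_goals first
    | exact mul_nonneg (le_of_lt hN) hs
    | exact hNs
    | positivity

lemma g_hasFDerivAt_pos (ws w0 : E) (hws : ws ≠ 0) (hw0 : w0 ≠ 0)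
    (hpar : ⟪w0, ws⟫ = ‖w0‖ * ‖ws‖) :
    HasFDerivAt (fun w => g w ws) ((1 / 2 : ℝ) • (innerSL ℝ ws : E →L[ℝ] ℝ)) w0 := by
  have hSn : (0:ℝ) < ‖ws‖ := norm_pos_iff.2 hws
  have hN0 : (0:ℝ) < ‖w0‖ := norm_pos_iff.2 hw0
  have hpi : (0:ℝ) < π := Real.pi_pos
  have hsm := (inner_eq_norm_mul_iff_real (x := w0) (y := ws)).1 hpar
  have hc : w0 = (‖w0‖ / ‖ws‖) • ws := by
    calc w0 = ‖ws‖⁻¹ • (‖ws‖ • w0) := by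
          rw [smul_smul, inv_mul_cancel₀ (ne_of_gt hSn), one_smul]
      _ = ‖ws‖⁻¹ • (‖w0‖ • ws) := by rw [hsm]
      _ = (‖w0‖ / ‖ws‖) • ws := by rw [smul_smul, div_eq_inv_mul]
  have hang0 : angle w0 ws = 0 := by
    rw [hc, angle_smul_left_of_pos ws ws (by positivity), angle_self hws]
  have hg0 : g w0 ws = (1 / 2) * ⟪w0, ws⟫ := by
    rw [g_eq, hang0, Real.sin_zero]
    field_simp
    ring
  rw [hasFDerivAt_iff_isLittleO_nhds_zero]
  refine Asymptotics.IsBigO.trans_isLittleO ?_ (Asymptotics.isLittleO_norm_pow_id (n := 3) (by norm_num))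
  rw [Asymptotics.isBigO_iff]
  refine ⟨(1 / (2 * π)) * ‖ws‖ ^ 3 / ((‖w0‖ / 2) * ‖ws‖) ^ 2, ?_⟩
  filter_upwards [Metric.ball_mem_nhds (0 : E) (half_pos hN0)] with h hh
  rw [mem_ball_zero_iff] at hh
  set w := w0 + h with hwdef
  have hlow : ‖w0‖ / 2 ≤ ‖w‖ := by
    have h1 : ‖w0‖ - ‖w‖ ≤ ‖w0 - w‖ := norm_sub_norm_le w0 w
    have h2 : w0 - w = -h := by rw [hwdef]; abel
    rw [h2, norm_neg] at h1
    linarith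
  have hwne : w ≠ 0 := by
    intro h0
    rw [h0, norm_zero] at hlow
    linarith
  have hNpos : 0 < ‖w‖ * ‖ws‖ := mul_pos (norm_pos_iff.2 hwne) hSn
  have hiadd : (⟪w, ws⟫ : ℝ) = ⟪w0, ws⟫ + ⟪h, ws⟫ := inner_add_left w0 h ws
  have hupos : 0 ≤ (⟪w, ws⟫ : ℝ) := by
    have hCS := abs_real_inner_le_norm h ws
    rw [abs_le] at hCS
    rw [hiadd, hpar]
    nlinarith [hCS.1]
  have happ : ((1 / 2 : ℝ) • (innerSL ℝ ws : E →L[ℝ] ℝ)) h = (1 / 2) * ⟪h, ws⟫ := by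
    simp [real_inner_comm]
  have hkey : g w ws - g w0 ws - ((1 / 2 : ℝ) • (innerSL ℝ ws : E →L[ℝ] ℝ)) h
      = (1 / (2 * π)) * (‖w‖ * ‖ws‖ * Real.sin (angle w ws) - angle w ws * ⟪w, ws⟫) := by
    rw [happ, g_eq, hg0, hiadd]
    field_simp
    ring
  rw [hkey]
  have hcw : w = (‖w0‖ / ‖ws‖) • ws + h := by rw [hwdef, ← hc]
  have hbound1 := rem_pos w ws hupos
  have hbound2 : ‖w‖ * ‖ws‖ * Real.sin (angle w ws) ^ 3
      ≤ (‖ws‖ * ‖h‖) ^ 3 / (‖w‖ * ‖ws‖) ^ 2 := by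
    rw [hcw] at hwne ⊢
    exact cube_bound ws h _ hwne hws
  have hbound3 : (‖ws‖ * ‖h‖) ^ 3 / (‖w‖ * ‖ws‖) ^ 2
      ≤ (‖ws‖ * ‖h‖) ^ 3 / ((‖w0‖ / 2) * ‖ws‖) ^ 2 := by
    gcongr
    all_goals first
      | exact mul_le_mul_of_nonneg_right hlow (le_of_lt hSn)
      | positivity
  rw [Real.norm_eq_abs, abs_mul, abs_of_pos (by positivity : (0:ℝ) < 1 / (2 * π))]
  calc (1 / (2 * π)) * |‖w‖ * ‖ws‖ * Real.sin (angle w ws) - angle w ws * ⟪w, ws⟫|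
      ≤ (1 / (2 * π)) * ((‖ws‖ * ‖h‖) ^ 3 / ((‖w0‖ / 2) * ‖ws‖) ^ 2) := by
        have := le_trans hbound1 (le_trans hbound2 hbound3)
        exact mul_le_mul_of_nonneg_left this (by positivity)
    _ = (1 / (2 * π)) * ‖ws‖ ^ 3 / ((‖w0‖ / 2) * ‖ws‖) ^ 2 * ‖‖h‖ ^ 3‖ := by
        rw [Real.norm_eq_abs, abs_of_nonneg (by positivity : (0:ℝ) ≤ ‖h‖ ^ 3)]
        ring

lemma g_hasFDerivAt_neg (ws w0 : E) (hws : ws ≠ 0) (hw0 : w0 ≠ 0)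
    (hpar : ⟪w0, ws⟫ = -(‖w0‖ * ‖ws‖)) :
    HasFDerivAt (fun w => g w ws) (0 : E →L[ℝ] ℝ) w0 := by
  have hSn : (0:ℝ) < ‖ws‖ := norm_pos_iff.2 hws
  have hN0 : (0:ℝ) < ‖w0‖ := norm_pos_iff.2 hw0
  have hpi : (0:ℝ) < π := Real.pi_pos
  have hpar' : ⟪-w0, ws⟫ = ‖-w0‖ * ‖ws‖ := by
    rw [inner_neg_left, hpar, norm_neg]; ring
  have hsm := (inner_eq_norm_mul_iff_real (x := -w0) (y := ws)).1 hpar'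
  rw [norm_neg] at hsm
  have hc : w0 = -((‖w0‖ / ‖ws‖) • ws) := by
    have : -w0 = (‖w0‖ / ‖ws‖) • ws := by
      calc -w0 = ‖ws‖⁻¹ • (‖ws‖ • -w0) := by
            rw [smul_smul, inv_mul_cancel₀ (ne_of_gt hSn), one_smul]
        _ = ‖ws‖⁻¹ • (‖w0‖ • ws) := by rw [hsm]
        _ = (‖w0‖ / ‖ws‖) • ws := by rw [smul_smul, div_eq_inv_mul]
    rw [← this, neg_neg]
  have hangπ : angle w0 ws = π := by
    rw [hc, show -((‖w0‖ / ‖ws‖) • ws) = (-(‖w0‖ / ‖ws‖)) • ws by rw [neg_smul],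
      angle_smul_left_of_neg ws ws (by rw [neg_lt, neg_zero]; positivity)]
    rw [angle_eq_pi_iff]
    exact ⟨neg_ne_zero.2 hws, -1, by norm_num, by simp⟩
  have hg0 : g w0 ws = 0 := by
    rw [g_eq, hangπ, Real.sin_pi]
    simp
  rw [hasFDerivAt_iff_isLittleO_nhds_zero]
  refine Asymptotics.IsBigO.trans_isLittleO ?_ (Asymptotics.isLittleO_norm_pow_id (n := 3) (by norm_num))
  rw [Asymptotics.isBigO_iff]
  refine ⟨(1 / (2 * π)) * ‖ws‖ ^ 3 / ((‖w0‖ / 2) * ‖ws‖) ^ 2, ?_⟩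
  filter_upwards [Metric.ball_mem_nhds (0 : E) (half_pos hN0)] with h hh
  rw [mem_ball_zero_iff] at hh
  set w := w0 + h with hwdef
  have hlow : ‖w0‖ / 2 ≤ ‖w‖ := by
    have h1 : ‖w0‖ - ‖w‖ ≤ ‖w0 - w‖ := norm_sub_norm_le w0 w
    have h2 : w0 - w = -h := by rw [hwdef]; abel
    rw [h2, norm_neg] at h1
    linarith
  have hwne : w ≠ 0 := by
    intro h0
    rw [h0, norm_zero] at hlow
    linarith
  have hiadd : (⟪w, ws⟫ : ℝ) = ⟪w0, ws⟫ + ⟪h, ws⟫ := inner_add_left w0 h ws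
  have huneg : (⟪w, ws⟫ : ℝ) ≤ 0 := by
    have hCS := abs_real_inner_le_norm h ws
    rw [abs_le] at hCS
    rw [hiadd, hpar]
    nlinarith [hCS.2]
  have hkey : g w ws - g w0 ws - (0 : E →L[ℝ] ℝ) h
      = (1 / (2 * π)) * (‖w‖ * ‖ws‖ * Real.sin (angle w ws) + (π - angle w ws) * ⟪w, ws⟫) := by
    rw [hg0, g_eq]
    simp
  rw [hkey]
  have hcw : w = (-(‖w0‖ / ‖ws‖)) • ws + h := by rw [hwdef, neg_smul, ← hc]
  have hbound1 := rem_neg w ws huneg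
  have hbound2 : ‖w‖ * ‖ws‖ * Real.sin (angle w ws) ^ 3
      ≤ (‖ws‖ * ‖h‖) ^ 3 / (‖w‖ * ‖ws‖) ^ 2 := by
    rw [hcw] at hwne ⊢
    exact cube_bound ws h _ hwne hws
  have hbound3 : (‖ws‖ * ‖h‖) ^ 3 / (‖w‖ * ‖ws‖) ^ 2
      ≤ (‖ws‖ * ‖h‖) ^ 3 / ((‖w0‖ / 2) * ‖ws‖) ^ 2 := by
    gcongr
    all_goals first
      | exact mul_le_mul_of_nonneg_right hlow (le_of_lt hSn)
      | positivity
  rw [Real.norm_eq_abs, abs_mul, abs_of_pos (by positivity : (0:ℝ) < 1 / (2 * π))]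
  calc (1 / (2 * π)) * |‖w‖ * ‖ws‖ * Real.sin (angle w ws) + (π - angle w ws) * ⟪w, ws⟫|
      ≤ (1 / (2 * π)) * ((‖ws‖ * ‖h‖) ^ 3 / ((‖w0‖ / 2) * ‖ws‖) ^ 2) := by
        have := le_trans hbound1 (le_trans hbound2 hbound3)
        exact mul_le_mul_of_nonneg_left this (by positivity)
    _ = (1 / (2 * π)) * ‖ws‖ ^ 3 / ((‖w0‖ / 2) * ‖ws‖) ^ 2 * ‖‖h‖ ^ 3‖ := by
        rw [Real.norm_eq_abs, abs_of_nonneg (by positivity : (0:ℝ) ≤ ‖h‖ ^ 3)]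
        ring

lemma g_diffAt (ws w : E) (hws : ws ≠ 0) (hw : w ≠ 0) :
    DifferentiableAt ℝ (fun v => g v ws) w := by
  have hSn : (0:ℝ) < ‖ws‖ := norm_pos_iff.2 hws
  have hN0 : (0:ℝ) < ‖w‖ := norm_pos_iff.2 hw
  have hN : (0:ℝ) < ‖w‖ * ‖ws‖ := mul_pos hN0 hSn
  rcases lt_or_eq_of_le (abs_real_inner_le_norm w ws) with hlt | heq
  · -- strict Cauchy-Schwarz
    have hinner : DifferentiableAt ℝ (fun v : E => (⟪v, ws⟫ : ℝ)) w :=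
      differentiableAt_fun_id.inner ℝ (differentiableAt_const ws)
    have hnorm : DifferentiableAt ℝ (fun v : E => ‖v‖) w :=
      differentiableAt_fun_id.norm ℝ hw
    have hden : DifferentiableAt ℝ (fun v : E => ‖v‖ * ‖ws‖) w :=
      hnorm.mul (differentiableAt_const _)
    have hq : DifferentiableAt ℝ (fun v : E => (⟪v, ws⟫ : ℝ) * (‖v‖ * ‖ws‖)⁻¹) w :=
      hinner.mul (hden.inv (ne_of_gt hN))
    have habs : |(⟪w, ws⟫ : ℝ) * (‖w‖ * ‖ws‖)⁻¹| < 1 := by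
      rw [← div_eq_mul_inv]
      rw [abs_div, abs_of_pos hN, div_lt_one hN]
      exact hlt
    rw [abs_lt] at habs
    have hang : DifferentiableAt ℝ (fun v : E => angle v ws) w := by
      have hrw : (fun v : E => angle v ws)
          = fun v : E => Real.arccos ((⟪v, ws⟫ : ℝ) * (‖v‖ * ‖ws‖)⁻¹) := by
        funext v
        rw [angle, div_eq_mul_inv]
      rw [hrw]
      exact DifferentiableAt.comp (g := Real.arccos) w (Real.differentiableAt_arccos.2 ⟨ne_of_gt habs.1, ne_of_lt habs.2⟩) hq
    unfold g
    exact (((differentiableAt_const _).mul hnorm).mul (differentiableAt_const _)).mul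
      (hang.sin.add (((differentiableAt_const _).sub hang).mul hang.cos))
  · rcases (abs_eq (le_of_lt hN)).1 heq with hpos | hneg
    · exact (g_hasFDerivAt_pos ws w hws hw hpos).differentiableAt
    · exact (g_hasFDerivAt_neg ws w hws hw hneg).differentiableAt

end Aux

/-- The no-overlap population loss
`ℓ(w) = (1/k²)·(γ‖w‖² − 2k·g(w,w*) − 2β‖w‖‖w*‖ + γ‖w*‖²)`,
where `β = (k²−k)/(2π)` and `γ = β + k/2`. -/
noncomputable def nol {m : ℕ} (k : ℕ) (ws : EuclideanSpace ℝ (Fin m))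
    (w : EuclideanSpace ℝ (Fin m)) : ℝ :=
  (1 / (k : ℝ) ^ 2) *
    (((((k : ℝ) ^ 2 - k) / (2 * π)) + (k : ℝ) / 2) * ‖w‖ ^ 2
      - 2 * (k : ℝ) * g w ws
      - 2 * (((k : ℝ) ^ 2 - k) / (2 * π)) * ‖w‖ * ‖ws‖
      + ((((k : ℝ) ^ 2 - k) / (2 * π)) + (k : ℝ) / 2) * ‖ws‖ ^ 2)

/-- The no-overlap population loss `ℓ` is differentiable at `w` if and only if `w ≠ 0`. -/
theorem stmt3 (k m : ℕ) (hk : 1 ≤ k) (hm : 2 ≤ m)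
    (ws : EuclideanSpace ℝ (Fin m)) (hws : ws ≠ 0)
    (w : EuclideanSpace ℝ (Fin m)) :
    DifferentiableAt ℝ (nol k ws) w ↔ w ≠ 0 := by
  have hpi : (0:ℝ) < π := Real.pi_pos
  have hkR : (0:ℝ) < (k:ℝ) := by exact_mod_cast hk
  have hSn : (0:ℝ) < ‖ws‖ := norm_pos_iff.2 hws
  constructor
  · intro hdiff
    intro hw0
    subst hw0
    -- find a unit vector orthogonal to ws
    have hfin : Module.finrank ℝ (EuclideanSpace ℝ (Fin m)) = m := by
      simp [finrank_euclideanSpace]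
    have hspan : Module.finrank ℝ (ℝ ∙ ws) = 1 := finrank_span_singleton hws
    have hsum := Submodule.finrank_add_finrank_orthogonal (K := (ℝ ∙ ws))
    rw [hfin, hspan] at hsum
    have hbot : (ℝ ∙ ws)ᗮ ≠ ⊥ := by
      intro hb
      rw [hb, finrank_bot] at hsum
      omega
    obtain ⟨v, hv, hvne⟩ := Submodule.exists_mem_ne_zero_of_ne_bot hbot
    have hvorth : ∀ x ∈ (ℝ ∙ ws), ⟪x, v⟫ = 0 := (Submodule.mem_orthogonal _ v).1 hv
    have hwsv : ⟪ws, v⟫ = 0 := hvorth ws (Submodule.mem_span_singleton_self ws)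
    set u : EuclideanSpace ℝ (Fin m) := ‖v‖⁻¹ • v with hu
    have hu1 : ‖u‖ = 1 := norm_smul_inv_norm hvne
    have hu0 : ⟪u, ws⟫ = 0 := by
      rw [hu, real_inner_smul_left, real_inner_comm, hwsv, mul_zero]
    -- the line t ↦ t • u
    have hline : DifferentiableAt ℝ (fun t : ℝ => t • u) 0 :=
      differentiableAt_fun_id.fun_smul (differentiableAt_const u)
    have hcomp : DifferentiableAt ℝ (fun t : ℝ => nol k ws (t • u)) 0 := by
      have h0 : DifferentiableAt ℝ (nol k ws) ((fun t : ℝ => t • u) 0) := by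
        simpa using hdiff
      exact DifferentiableAt.comp (g := nol k ws) (f := fun t : ℝ => t • u) 0 h0 hline
    -- explicit formula along the line
    set γ : ℝ := (((k : ℝ) ^ 2 - k) / (2 * π)) + (k : ℝ) / 2 with hγ
    have hval : ∀ t : ℝ, nol k ws (t • u)
        = (γ / (k:ℝ)^2) * t ^ 2 + (γ / (k:ℝ)^2) * ‖ws‖ ^ 2 - (‖ws‖ / π) * |t| := by
      intro t
      have hang : angle (t • u) ws = π / 2 := by
        rw [angle, real_inner_smul_left, hu0, mul_zero, zero_div, Real.arccos_zero]
      unfold nol g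
      rw [hang, Real.sin_pi_div_two, Real.cos_pi_div_two, norm_smul, hu1,
        Real.norm_eq_abs, mul_one]
      rw [sq_abs, hγ]
      have hk0 : (k:ℝ) ≠ 0 := ne_of_gt hkR
      field_simp [Real.pi_ne_zero]
      ring
    have habs : (fun t : ℝ => |t|)
        = fun t : ℝ => ((γ / (k:ℝ)^2) * t ^ 2 + (γ / (k:ℝ)^2) * ‖ws‖ ^ 2
            - nol k ws (t • u)) * (π / ‖ws‖) := by
      funext t
      rw [hval t, hγ]
      field_simp [Real.pi_ne_zero, ne_of_gt hSn]
      ring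
    have : DifferentiableAt ℝ (fun t : ℝ => |t|) 0 := by
      rw [habs]
      exact ((((differentiableAt_const _).mul (differentiableAt_pow 2)).add
        (differentiableAt_const _)).sub hcomp).mul (differentiableAt_const _)
    exact not_differentiableAt_abs_zero this
  · intro hw
    have hg := g_diffAt ws w hws hw
    have hn : DifferentiableAt ℝ (fun v : EuclideanSpace ℝ (Fin m) => ‖v‖) w :=
      differentiableAt_fun_id.norm ℝ hw
    unfold nol
    exact (differentiableAt_const _).mul
      (((((differentiableAt_const _).mul (hn.pow 2)).sub
        ((differentiableAt_const _).mul hg)).sub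
        (((differentiableAt_const _).mul hn).mul (differentiableAt_const _))).add
        (differentiableAt_const _))
end

section
/- Let k ≥ 2, m ≥ 1, and let w* ∈ ℝ^m be nonzero. Then w = 0 is a strict local maximum of the no-overlap population loss ℓ: there exists r > 0 such that for every w with 0 < ‖w‖ < r, ℓ(w) < ℓ(0). -/
/-!
Since `sin θ + (π - θ) cos θ ≥ 0` on `[0, π]`, the cross term `g w w*` is nonnegative, so
`k² (ℓ(w) - ℓ(0)) ≤ γ‖w‖² - 2β‖w‖‖w*‖ = ‖w‖ (γ‖w‖ - 2β‖w*‖)`.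
For `k ≥ 2` we have `β > 0`, so this is negative once `0 < ‖w‖ < 2β‖w*‖/γ`.
-/

open scoped RealInnerProductSpace
open InnerProductGeometry Real

theorem Real.mul_cos_le_sin_s4 {x : ℝ} (h0 : 0 ≤ x) (hπ : x ≤ π) : x * cos x ≤ sin x := by
  rcases lt_or_ge x (π / 2) with hx | hx
  · have hcos : 0 < cos x := cos_pos_of_mem_Ioo ⟨by linarith [pi_pos], hx⟩
    have htan : x ≤ sin x / cos x := tan_eq_sin_div_cos x ▸ le_tan h0 hx
    exact (le_div_iff₀ hcos).1 htan
  · have hcos : cos x ≤ 0 := cos_nonpos_of_pi_div_two_le_of_le hx (by linarith)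
    nlinarith [sin_nonneg_of_nonneg_of_le_pi h0 hπ]

theorem Real.sin_add_pi_sub_mul_cos_nonneg {θ : ℝ} (h0 : 0 ≤ θ) (hπ : θ ≤ π) :
    0 ≤ sin θ + (π - θ) * cos θ := by
  have key := mul_cos_le_sin_s4 (x := π - θ) (by linarith) (by linarith)
  rw [sin_pi_sub, cos_pi_sub] at key
  linarith

theorem g_nonneg {E : Type*} [NormedAddCommGroup E] [InnerProductSpace ℝ E] (u v : E) :
    0 ≤ g u v := by
  have := sin_add_pi_sub_mul_cos_nonneg (angle_nonneg u v) (angle_le_pi u v)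
  unfold g
  positivity

theorem nol_zero {m : ℕ} (k : ℕ) (ws : EuclideanSpace ℝ (Fin m)) :
    nol k ws 0 = (1 / (k : ℝ) ^ 2) *
      ((((k : ℝ) ^ 2 - k) / (2 * π) + (k : ℝ) / 2) * ‖ws‖ ^ 2) := by
  simp [nol, g]

theorem stmt4_general (k m : ℕ) (hk : 2 ≤ k)
    (ws : EuclideanSpace ℝ (Fin m)) (hws : ws ≠ 0) :
    ∃ r > 0, ∀ w : EuclideanSpace ℝ (Fin m),
      0 < ‖w‖ → ‖w‖ < r → nol k ws w < nol k ws 0 := by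
  have hk' : (2 : ℝ) ≤ k := by exact_mod_cast hk
  rw [nol_zero]
  unfold nol
  set β : ℝ := ((k : ℝ) ^ 2 - k) / (2 * π)
  set γ : ℝ := β + (k : ℝ) / 2
  have hβ : 0 < β := div_pos (by nlinarith) (by positivity)
  have hγ : 0 < γ := by positivity
  have hws' : 0 < ‖ws‖ := norm_pos_iff.2 hws
  refine ⟨2 * β * ‖ws‖ / γ, by positivity, fun w hw hwr => ?_⟩
  have hwr' : γ * ‖w‖ < 2 * β * ‖ws‖ := (lt_div_iff₀' hγ).1 hwr
  have hquad : γ * ‖w‖ ^ 2 - 2 * β * ‖w‖ * ‖ws‖ < 0 := by nlinarith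
  have hcross : 0 ≤ 2 * (k : ℝ) * g w ws := by have := g_nonneg w ws; positivity
  refine mul_lt_mul_of_pos_left ?_ (by positivity)
  linarith

/-- For `k ≥ 2`, `w = 0` is a strict local maximum of the no-overlap population loss `ℓ`:
there is `r > 0` such that `ℓ(w) < ℓ(0)` whenever `0 < ‖w‖ < r`. -/
theorem stmt4 (k m : ℕ) (hk : 2 ≤ k) (hm : 1 ≤ m)
    (ws : EuclideanSpace ℝ (Fin m)) (hws : ws ≠ 0) :
    ∃ r > 0, ∀ w : EuclideanSpace ℝ (Fin m),
      0 < ‖w‖ → ‖w‖ < r → nol k ws w < nol k ws 0 :=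
  stmt4_general k m hk ws hws
end

section
/- Let k ≥ 1, m ≥ 1, and let w* ∈ ℝ^m be nonzero. Then w* is the unique global minimum of the no-overlap population loss ℓ: ℓ(w*) = 0 and ℓ(w) > 0 for every w ≠ w*. -/
/-!
Completing the square gives `k² ℓ(w) = γ (‖w‖ - ‖w*‖)² + 2k (‖w‖‖w*‖/2 - g(w, w*))`, and
`g(u, v) ≤ ‖u‖‖v‖/2` holds because `θ ↦ π - sin θ - (π - θ) cos θ` has derivative `(π - θ) sin θ ≥ 0`
on `[0, π]` and vanishes at `0`. Both terms are therefore nonnegative; the first vanishes only if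
`‖w‖ = ‖w*‖`, and then the second vanishes only if the angle between `w` and `w*` is `0`,
i.e. `w = w*`.
-/

open scoped RealInnerProductSpace
open InnerProductGeometry Real

theorem sin_add_pi_sub_mul_cos_lt_pi {θ : ℝ} (h0 : 0 < θ) (hπ : θ ≤ π) :
    sin θ + (π - θ) * cos θ < π := by
  let f : ℝ → ℝ := fun t => π - sin t - (π - t) * cos t
  have hf : ∀ t, HasDerivAt f ((π - t) * sin t) t := fun t =>
    (((hasDerivAt_const t π).sub (hasDerivAt_sin t)).sub
      (((hasDerivAt_id' t).const_sub π).mul (hasDerivAt_cos t))).congr_deriv (by ring)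
  have hmono : StrictMonoOn f (Set.Icc 0 π) := by
    refine strictMonoOn_of_deriv_pos (convex_Icc 0 π)
      (fun t _ => (hf t).continuousAt.continuousWithinAt) fun t ht => ?_
    rw [interior_Icc] at ht
    rw [(hf t).deriv]
    exact mul_pos (by linarith [ht.2]) (sin_pos_of_pos_of_lt_pi ht.1 ht.2)
  have := hmono ⟨le_rfl, pi_pos.le⟩ ⟨h0.le, hπ⟩ h0
  simp only [f, sin_zero, cos_zero, sub_zero, mul_one, sub_self] at this
  linarith

theorem sin_add_pi_sub_mul_cos_le_pi {θ : ℝ} (h0 : 0 ≤ θ) (hπ : θ ≤ π) :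
    sin θ + (π - θ) * cos θ ≤ π := by
  rcases h0.eq_or_lt with rfl | h
  · simp
  · exact (sin_add_pi_sub_mul_cos_lt_pi h hπ).le

section

variable {E : Type*} [NormedAddCommGroup E] [InnerProductSpace ℝ E]

theorem g_eq_half_mul_norm_mul_norm_sub (u v : E) :
    g u v = ‖u‖ * ‖v‖ / 2 -
      ‖u‖ * ‖v‖ / (2 * π) * (π - (sin (angle u v) + (π - angle u v) * cos (angle u v))) := by
  unfold g
  field_simp
  ring

theorem g_self (u : E) : g u u = ‖u‖ ^ 2 / 2 := by
  rcases eq_or_ne u 0 with rfl | hu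
  · simp [g]
  · rw [g_eq_half_mul_norm_mul_norm_sub, angle_self hu]
    simp [sq]

theorem g_le_half_mul_norm_mul_norm (u v : E) : g u v ≤ ‖u‖ * ‖v‖ / 2 := by
  rw [g_eq_half_mul_norm_mul_norm_sub, sub_le_self_iff]
  have := sin_add_pi_sub_mul_cos_le_pi (angle_nonneg u v) (angle_le_pi u v)
  have := pi_pos
  exact mul_nonneg (by positivity) (by linarith)

theorem angle_pos_of_norm_eq_of_ne {u v : E} (hnorm : ‖u‖ = ‖v‖) (hne : u ≠ v) :
    0 < angle u v := by
  refine (angle_nonneg u v).lt_of_ne' fun h => hne ?_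
  obtain ⟨hu, r, hr, rfl⟩ := angle_eq_zero_iff.mp h
  rw [norm_smul, norm_eq_abs, abs_of_pos hr, eq_comm, mul_eq_right₀ (norm_ne_zero_iff.mpr hu)]
    at hnorm
  rw [hnorm, one_smul]

theorem g_lt_half_mul_norm_mul_norm {u v : E} (hnorm : ‖u‖ = ‖v‖) (hne : u ≠ v) :
    g u v < ‖u‖ * ‖v‖ / 2 := by
  have hu : 0 < ‖u‖ := norm_pos_iff.mpr <| by
    rintro rfl
    exact hne (norm_eq_zero.mp (hnorm.symm.trans norm_zero)).symm
  rw [g_eq_half_mul_norm_mul_norm_sub, sub_lt_self_iff]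
  have := sin_add_pi_sub_mul_cos_lt_pi (angle_pos_of_norm_eq_of_ne hnorm hne) (angle_le_pi u v)
  have := pi_pos
  exact mul_pos (by rw [← hnorm]; positivity) (by linarith)

end

theorem nol_eq {m : ℕ} (k : ℕ) (ws w : EuclideanSpace ℝ (Fin m)) :
    nol k ws w = (1 / (k : ℝ) ^ 2) *
      ((((k : ℝ) ^ 2 - k) / (2 * π) + k / 2) * (‖w‖ - ‖ws‖) ^ 2
        + 2 * k * (‖w‖ * ‖ws‖ / 2 - g w ws)) := by
  unfold nol
  ring

theorem stmt5_general (k m : ℕ) (hk : 1 ≤ k)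
    (ws : EuclideanSpace ℝ (Fin m)) :
    nol k ws ws = 0 ∧ ∀ w : EuclideanSpace ℝ (Fin m), w ≠ ws → 0 < nol k ws w := by
  refine ⟨by rw [nol_eq, g_self]; ring, fun w hw => ?_⟩
  have hk1 : (1 : ℝ) ≤ k := by exact_mod_cast hk
  have hγ : 0 < ((k : ℝ) ^ 2 - k) / (2 * π) + k / 2 := by
    have : (0 : ℝ) ≤ (k ^ 2 - k) / (2 * π) := div_nonneg (by nlinarith) (by positivity)
    linarith
  have hgap := g_le_half_mul_norm_mul_norm w ws
  rw [nol_eq]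
  refine mul_pos (by positivity) ?_
  rcases eq_or_ne ‖w‖ ‖ws‖ with hn | hn
  · have hlt := g_lt_half_mul_norm_mul_norm hn hw
    rw [hn] at hlt ⊢
    rw [sub_self]
    nlinarith
  · nlinarith [mul_pos hγ (sq_pos_of_ne_zero (sub_ne_zero.mpr hn))]

/-- `w*` is the unique global minimum of the no-overlap population loss `ℓ`:
`ℓ(w*) = 0` and `ℓ(w) > 0` for every `w ≠ w*`. -/
theorem stmt5 (k m : ℕ) (hk : 1 ≤ k) (hm : 1 ≤ m)
    (ws : EuclideanSpace ℝ (Fin m)) (hws : ws ≠ 0) :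
    nol k ws ws = 0 ∧ ∀ w : EuclideanSpace ℝ (Fin m), w ≠ ws → 0 < nol k ws w :=
  stmt5_general k m hk ws
end

section
/- Let k ≥ 1, let S be a finite set, let * be an element not in S, and let 𝒞 be a family of subsets of S. Set S' = S ∪ {*} and 𝒞' = 𝒞 ∪ {{j,*} : j ∈ S}. Then there exist pairwise disjoint sets S_1,…,S_k with S_1 ∪ ⋯ ∪ S_k = S such that no member of 𝒞 is contained in any S_i, if and only if there exist pairwise disjoint sets T_1,…,T_{k+1} with T_1 ∪ ⋯ ∪ T_{k+1} = S' such that no member of 𝒞' is contained in any T_i. -/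
/-!
Given a splitting of `𝒞` by `k` sets, adding `{*}` as a new part splits `𝒞'`: no member of `𝒞`
fits in `{*}` (members are nonempty subsets of `S`, nonempty because `k ≥ 1` parts avoid them),
and each pair `{j, *}` meets two parts. Conversely, in a splitting of `𝒞'` the part containing `*`
can contain no `j ∈ S`, since it would then contain `{j, *}`; so that part is `{*}`, and deleting it
leaves a splitting of `𝒞` by `k` sets.
-/

open Finset Function

section

variable {α ι : Type*} [DecidableEq α]

def IsSplitting [Fintype ι] (S : Finset α) (C : Set (Finset α)) (T : ι → Finset α) : Prop :=
  Pairwise (Disjoint on T) ∧ univ.biUnion T = S ∧ ∀ c ∈ C, ∀ i, ¬ c ⊆ T i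

def pairsWith (S : Finset α) (star : α) : Set (Finset α) :=
  {c | ∃ j ∈ S, c = {j, star}}

namespace IsSplitting

variable [Fintype ι] {S : Finset α} {star : α} {C C' : Set (Finset α)} {T : ι → Finset α}

lemma subset (hT : IsSplitting S C T) (i : ι) : T i ⊆ S :=
  hT.2.1 ▸ subset_biUnion_of_mem T (mem_univ i)

lemma exists_mem (hT : IsSplitting S C T) {a : α} (ha : a ∈ S) : ∃ i, a ∈ T i := by
  simpa [← hT.2.1] using ha

lemma nonempty_of_mem [Nonempty ι] (hT : IsSplitting S C T) {c : Finset α} (hc : c ∈ C) :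
    c.Nonempty :=
  nonempty_iff_ne_empty.2 fun h ↦ hT.2.2 c hc (Classical.arbitrary ι) (h ▸ empty_subset _)

lemma mono (hT : IsSplitting S C' T) (hC : C ⊆ C') : IsSplitting S C T :=
  ⟨hT.1, hT.2.1, fun c hc ↦ hT.2.2 c (hC hc)⟩

lemma eq_singleton (hT : IsSplitting (insert star S) C T) (hpairs : ∀ j ∈ S, {j, star} ∈ C)
    {i : ι} (hi : star ∈ T i) : T i = {star} := by
  refine eq_singleton_iff_unique_mem.2 ⟨hi, fun x hx ↦ ?_⟩
  rcases mem_insert.1 (hT.subset i hx) with rfl | hxS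
  · rfl
  · exact absurd (insert_subset hx (singleton_subset_iff.2 hi)) (hT.2.2 _ (hpairs x hxS) i)

lemma succAbove {n : ℕ} {T : Fin (n + 1) → Finset α} (hT : IsSplitting S C T) (i₀ : Fin (n + 1)) :
    IsSplitting (S \ T i₀) C (fun i ↦ T (i₀.succAbove i)) := by
  refine ⟨hT.1.comp_of_injective Fin.succAbove_right_injective, ?_, fun c hc i ↦ hT.2.2 c hc _⟩
  ext a
  have hdisj : ∀ i, a ∈ T (i₀.succAbove i) → a ∉ T i₀ := fun i ha ↦
    disjoint_left.1 (hT.1 (Fin.succAbove_ne i₀ i)) ha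
  simp only [mem_biUnion, mem_univ, true_and, mem_sdiff, ← hT.2.1, Fin.exists_iff_succAbove i₀]
  grind

lemma cons_singleton {n : ℕ} {T : Fin n → Finset α} (hT : IsSplitting S C T) (hstar : star ∉ S)
    (hC : ∀ c ∈ C, c ⊆ S) (hne : ∀ c ∈ C, c.Nonempty) :
    IsSplitting (insert star S) (C ∪ pairsWith S star) (Fin.cons {star} T) := by
  have hstarT : ∀ i, star ∉ T i := fun i h ↦ hstar (hT.subset i h)
  refine ⟨pairwise_fin_succ_iff.2 ⟨?_, ?_, hT.1⟩, ?_, ?_⟩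
  · simpa [onFun] using hstarT
  · simpa [onFun] using hstarT
  · ext a
    simp [Fin.exists_fin_succ, ← hT.2.1]
  · rintro c (hc | ⟨j, hj, rfl⟩) i <;> cases i using Fin.cases <;> simp only [Fin.cons_zero, Fin.cons_succ]
    · obtain ⟨x, hx⟩ := hne c hc
      exact fun hsub ↦ hstar (mem_singleton.1 (hsub hx) ▸ hC c hc hx)
    · exact hT.2.2 c hc _
    · exact fun hsub ↦ hstar (mem_singleton.1 (hsub (mem_insert_self j _)) ▸ hj)
    · exact fun hsub ↦ hstarT _ (hsub (by simp))

end IsSplitting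

end

/-- The induction step of the NP-completeness of Set-Splitting-by-k-Sets: with
`S' = S ∪ {*}` and `𝒞' = 𝒞 ∪ {{j, *} : j ∈ S}` (where `* ∉ S`), the collection `𝒞`
can be split by `k` disjoint sets covering `S` if and only if `𝒞'` can be split by
`k+1` disjoint sets covering `S'`. -/
theorem stmt8 {α : Type*} [DecidableEq α] (k : ℕ) (hk : 1 ≤ k)
    (S : Finset α) (star : α) (hstar : star ∉ S)
    (C : Set (Finset α)) (hC : ∀ c ∈ C, c ⊆ S) :
    (∃ T : Fin k → Finset α,
        (∀ i j : Fin k, i ≠ j → Disjoint (T i) (T j)) ∧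
        Finset.univ.biUnion T = S ∧
        ∀ c ∈ C, ∀ i : Fin k, ¬ c ⊆ T i) ↔
    (∃ T : Fin (k + 1) → Finset α,
        (∀ i j : Fin (k + 1), i ≠ j → Disjoint (T i) (T j)) ∧
        Finset.univ.biUnion T = insert star S ∧
        ∀ c ∈ (C ∪ {c' : Finset α | ∃ j ∈ S, c' = {j, star}}),
          ∀ i : Fin (k + 1), ¬ c ⊆ T i) := by
  show (∃ T, IsSplitting S C T) ↔ ∃ T, IsSplitting (insert star S) (C ∪ pairsWith S star) T
  constructor
  · rintro ⟨T, hT : IsSplitting S C T⟩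
    have : Nonempty (Fin k) := ⟨⟨0, hk⟩⟩
    exact ⟨_, hT.cons_singleton hstar hC fun c hc ↦ hT.nonempty_of_mem hc⟩
  · rintro ⟨T, hT : IsSplitting (insert star S) _ T⟩
    obtain ⟨i₀, hi₀⟩ := hT.exists_mem (mem_insert_self star S)
    have hsplit := hT.succAbove i₀
    rw [hT.eq_singleton (fun j hj ↦ Or.inr ⟨j, hj, rfl⟩) hi₀, sdiff_singleton_eq_erase,
      erase_insert hstar] at hsplit
    exact ⟨_, hsplit.mono Set.subset_union_left⟩
end

section
/- Let k ≥ 1, m ≥ 2, let w* ∈ ℝ^m be nonzero, and let 0 < λ < 1. If w_t ≠ 0 and 0 < θ_t < π, then the gradient descent iterate w_{t+1} = w_t − λ·G(w_t) is nonzero and satisfies θ_{t+1} < θ_t. -/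
/-!
For `w_t ≠ 0` the step is `w_{t+1} = c • w_t + d • w*` with `d > 0`, and `c > 0` because the
coefficient of `w_t` in `k² G(w_t)` is below `k²` (the `sin θ_t` term is strictly positive and
`π > 1`). For non-parallel `x`, `y` the parallelogram law for angles splits
`θ(x, y) = θ(x, x + t y) + θ(x + t y, y)`, and the first part is positive, so moving along
`w*` strictly decreases the angle to `w*`.
-/

open scoped RealInnerProductSpace
open InnerProductGeometry Real Classical

/-- The gradient of the no-overlap population loss: `G(0) = 0` and, for `w ≠ 0`,
`G(w) = (1/k²)·[(k + (k²−k)/π − (k‖w*‖ sin θ_{w,w*})/(π‖w‖) − ((k²−k)‖w*‖)/(π‖w‖))·w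
        − (k/π)·(π − θ_{w,w*})·w*]`. -/
noncomputable def nG {m : ℕ} (k : ℕ) (ws : EuclideanSpace ℝ (Fin m))
    (w : EuclideanSpace ℝ (Fin m)) : EuclideanSpace ℝ (Fin m) :=
  if w = 0 then 0 else
    (1 / (k : ℝ) ^ 2) •
      ((((k : ℝ) + ((k : ℝ) ^ 2 - k) / π
          - ((k : ℝ) * ‖ws‖ * Real.sin (angle w ws)) / (π * ‖w‖)
          - (((k : ℝ) ^ 2 - k) * ‖ws‖) / (π * ‖w‖)) • w)
        - (((k : ℝ) / π) * (π - angle w ws)) • ws)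

/-- `α(k) = 1/k + (k²−k)/(πk²)`. -/
noncomputable def alphac (k : ℕ) : ℝ := 1 / (k : ℝ) + ((k : ℝ) ^ 2 - k) / (π * (k : ℝ) ^ 2)

section AngleGeometry

variable {V : Type*} [NormedAddCommGroup V] [InnerProductSpace ℝ V] {x y : V} {t : ℝ}

theorem InnerProductGeometry.angle_add_smul_pos (hy : y ≠ 0) (h0 : 0 < angle x y)
    (hπ : angle x y < π) (ht : 0 < t) : 0 < angle x (x + t • y) := by
  refine (angle_nonneg _ _).lt_of_ne' fun h => ?_
  obtain ⟨hx, r, -, hr⟩ := angle_eq_zero_iff.mp h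
  have hy' : y = (t⁻¹ * (r - 1)) • x := by
    rw [mul_smul, sub_smul, one_smul, ← hr, add_sub_cancel_left, smul_smul,
      inv_mul_cancel₀ ht.ne', one_smul]
  rcases lt_trichotomy (t⁻¹ * (r - 1)) 0 with hneg | hzero | hpos
  · rw [hy', angle_smul_right_of_neg _ _ hneg, angle_self_neg_of_nonzero hx] at hπ
    exact hπ.false
  · exact hy (by rw [hy', hzero, zero_smul])
  · rw [hy', angle_smul_right_of_pos _ _ hpos, angle_self hx] at h0
    exact h0.false

theorem InnerProductGeometry.angle_add_smul_right_lt (hy : y ≠ 0) (h0 : 0 < angle x y)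
    (hπ : angle x y < π) (ht : 0 < t) : angle (x + t • y) y < angle x y := by
  have hsplit := angle_eq_angle_add_add_angle_add x (smul_ne_zero ht.ne' hy)
  rw [angle_smul_right_of_pos _ _ ht, angle_smul_left_of_pos _ _ ht] at hsplit
  rw [angle_comm]
  linarith [angle_add_smul_pos hy h0 hπ ht]

theorem InnerProductGeometry.add_smul_ne_zero_of_angle_lt_pi (hy : y ≠ 0)
    (hπ : angle x y < π) (ht : 0 < t) : x + t • y ≠ 0 := by
  intro h
  rw [add_eq_zero_iff_eq_neg.mp h, angle_neg_left, angle_smul_left_of_pos _ _ ht,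
    angle_self hy, sub_zero] at hπ
  exact hπ.false

theorem InnerProductGeometry.smul_add_smul_ne_zero_and_angle_lt {c d : ℝ} (hy : y ≠ 0)
    (h0 : 0 < angle x y) (hπ : angle x y < π) (hc : 0 < c) (hd : 0 < d) :
    c • x + d • y ≠ 0 ∧ angle (c • x + d • y) y < angle x y := by
  have hcd : c • x + d • y = c • (x + (d / c) • y) := by
    rw [smul_add, smul_smul, mul_div_cancel₀ _ hc.ne']
  rw [hcd, angle_smul_left_of_pos _ _ hc]
  exact ⟨smul_ne_zero hc.ne' (add_smul_ne_zero_of_angle_lt_pi hy hπ (div_pos hd hc)),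
    angle_add_smul_right_lt hy h0 hπ (div_pos hd hc)⟩

end AngleGeometry

section NoOverlapGradient

variable {m : ℕ} {k : ℕ} {ws w : EuclideanSpace ℝ (Fin m)}

noncomputable def nGRadial (k : ℕ) (ws w : EuclideanSpace ℝ (Fin m)) : ℝ :=
  (k : ℝ) + ((k : ℝ) ^ 2 - k) / π
    - ((k : ℝ) * ‖ws‖ * Real.sin (angle w ws)) / (π * ‖w‖)
    - (((k : ℝ) ^ 2 - k) * ‖ws‖) / (π * ‖w‖)

theorem sub_smul_nG_of_ne_zero (hw : w ≠ 0) (lam : ℝ) :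
    w - lam • nG k ws w = (1 - lam * nGRadial k ws w / (k : ℝ) ^ 2) • w
      + (lam * ((k : ℝ) / π) * (π - angle w ws) / (k : ℝ) ^ 2) • ws := by
  rw [nG, if_neg hw, nGRadial]
  module

theorem nGRadial_lt_sq (hk : 1 ≤ k) (hws : ws ≠ 0) (hw : w ≠ 0) (h0 : 0 < angle w ws)
    (hπ : angle w ws < π) : nGRadial k ws w < (k : ℝ) ^ 2 := by
  have hk1 : (1 : ℝ) ≤ k := by exact_mod_cast hk
  have hkk : (0 : ℝ) ≤ (k : ℝ) ^ 2 - k := by nlinarith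
  have hsin := Real.sin_pos_of_pos_of_lt_pi h0 hπ
  have hws_pos := norm_pos_iff.mpr hws
  have hw_pos := norm_pos_iff.mpr hw
  have hsin_term : 0 < ((k : ℝ) * ‖ws‖ * Real.sin (angle w ws)) / (π * ‖w‖) := by positivity
  have hlin_term : 0 ≤ (((k : ℝ) ^ 2 - k) * ‖ws‖) / (π * ‖w‖) := by positivity
  have hconst : ((k : ℝ) ^ 2 - k) / π ≤ (k : ℝ) ^ 2 - k :=
    div_le_self hkk (by linarith [Real.pi_gt_three])
  rw [nGRadial]
  linarith

end NoOverlapGradient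

theorem stmt9_general (k m : ℕ) (hk : 1 ≤ k)
    (ws : EuclideanSpace ℝ (Fin m)) (hws : ws ≠ 0)
    (lam : ℝ) (hlam0 : 0 < lam) (hlam1 : lam < 1)
    (wt : EuclideanSpace ℝ (Fin m)) (hwt : wt ≠ 0)
    (hθ0 : 0 < angle wt ws) (hθπ : angle wt ws < π) :
    wt - lam • nG k ws wt ≠ 0 ∧
      angle (wt - lam • nG k ws wt) ws < angle wt ws := by
  have hk0 : (0 : ℝ) < k := by exact_mod_cast hk
  have hR := nGRadial_lt_sq hk hws hwt hθ0 hθπ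
  have hc : 0 < 1 - lam * nGRadial k ws wt / (k : ℝ) ^ 2 := by
    rw [sub_pos, div_lt_one (by positivity)]
    nlinarith
  have hd : 0 < lam * ((k : ℝ) / π) * (π - angle wt ws) / (k : ℝ) ^ 2 := by
    have hθπ_pos := sub_pos.mpr hθπ
    positivity
  rw [sub_smul_nG_of_ne_zero hwt]
  exact smul_add_smul_ne_zero_and_angle_lt hws hθ0 hθπ hc hd

/-- If `w_t ≠ 0`, `0 < θ_t < π` and `0 < λ < 1`, then the gradient descent iterate
`w_{t+1} = w_t − λ·G(w_t)` is nonzero and satisfies `θ_{t+1} < θ_t`. -/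
theorem stmt9 (k m : ℕ) (hk : 1 ≤ k) (hm : 2 ≤ m)
    (ws : EuclideanSpace ℝ (Fin m)) (hws : ws ≠ 0)
    (lam : ℝ) (hlam0 : 0 < lam) (hlam1 : lam < 1)
    (wt : EuclideanSpace ℝ (Fin m)) (hwt : wt ≠ 0)
    (hθ0 : 0 < angle wt ws) (hθπ : angle wt ws < π) :
    wt - lam • nG k ws wt ≠ 0 ∧
      angle (wt - lam • nG k ws wt) ws < angle wt ws :=
  stmt9_general k m hk ws hws lam hlam0 hlam1 wt hwt hθ0 hθπ
end

section
/- Let k ≥ 1, m ≥ 2, let w* ∈ ℝ^m be nonzero, and let 0 < λ < 1. If w_t ≠ 0 and π/2 < θ_t < π, then the gradient descent iterate w_{t+1} = w_t − λ·G(w_t) satisfies ‖w_{t+1}‖ ≥ (sin θ_t / sin θ_{t+1}) · min{ ‖w_t‖, ‖w*‖·sin θ_t / (α(k)·π) }. -/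
open scoped RealInnerProductSpace
open InnerProductGeometry Real Classical

/-
Write `w_{t+1} = a • w_t + b • w*` with `a = 1 - λ c`, `c` the coefficient of `w` in `G(w)`.
The component of `w_{t+1}` orthogonal to `w*` is `a` times that of `w_t`, so
`sin θ_{t+1} ‖w_{t+1}‖ = |a| sin θ_t ‖w_t‖`, and it remains to show `a ≥ min {1, s r / α(k)}` for
`s = sin θ_t`, `r = ‖w*‖ / (π ‖w_t‖)`. Now `α(k) - c = (k s + k² - k) r / k² ≥ s r` because
`s ≤ 1`; so for `0 ≤ λ ≤ 1` either `c ≤ 0` and `a ≥ 1`, or `a ≥ 1 - c ≥ 1 - α(k) + s r`, which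
is at least `min {1, s r / α(k)}` since `α(k) ≤ 1`.
-/

section SinAngle

variable {E : Type*} [NormedAddCommGroup E] [InnerProductSpace ℝ E]

theorem sin_angle_smul_add_smul_mul_norm {y : E} (hy : y ≠ 0) (x : E) (a b : ℝ) :
    Real.sin (angle (a • x + b • y) y) * ‖a • x + b • y‖ = |a| * (Real.sin (angle x y) * ‖x‖) := by
  have gram : ⟪a • x + b • y, a • x + b • y⟫ * ⟪y, y⟫ - ⟪a • x + b • y, y⟫ * ⟪a • x + b • y, y⟫
      = a ^ 2 * (⟪x, x⟫ * ⟪y, y⟫ - ⟪x, y⟫ * ⟪x, y⟫) := by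
    simp only [inner_add_left, inner_add_right, real_inner_smul_left, real_inner_smul_right,
      real_inner_comm y x]
    ring
  apply mul_right_cancel₀ (norm_ne_zero_iff.2 hy)
  rw [mul_assoc, sin_angle_mul_norm_mul_norm, gram, Real.sqrt_mul (sq_nonneg a),
    Real.sqrt_sq_eq_abs, mul_assoc, mul_assoc, sin_angle_mul_norm_mul_norm]

theorem sin_angle_div_sin_angle_smul_add_smul_mul_le_norm {y : E} (hy : y ≠ 0) {x : E}
    {a b M : ℝ} (hM : M ≤ |a| * ‖x‖) :
    Real.sin (angle x y) / Real.sin (angle (a • x + b • y) y) * M ≤ ‖a • x + b • y‖ := by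
  rcases (sin_angle_nonneg (a • x + b • y) y).eq_or_lt with hsin | hsin
  · rw [← hsin, div_zero, zero_mul]
    exact norm_nonneg _
  rw [div_mul_eq_mul_div, div_le_iff₀ hsin, mul_comm ‖_‖, sin_angle_smul_add_smul_mul_norm hy]
  calc Real.sin (angle x y) * M ≤ Real.sin (angle x y) * (|a| * ‖x‖) :=
        mul_le_mul_of_nonneg_left hM (sin_angle_nonneg x y)
    _ = |a| * (Real.sin (angle x y) * ‖x‖) := by ring

end SinAngle

theorem min_one_div_le_one_sub_mul {α x c lam : ℝ} (hα0 : 0 < α) (hα1 : α ≤ 1)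
    (hxc : x ≤ α - c) (hlam0 : 0 ≤ lam) (hlam1 : lam ≤ 1) :
    min 1 (x / α) ≤ 1 - lam * c := by
  rcases le_or_gt c 0 with hc | hc
  · exact (min_le_left _ _).trans (by nlinarith)
  have hmin : min 1 (x / α) ≤ 1 - α + x := by
    rcases le_or_gt α x with hαx | hxα
    · exact (min_le_left _ _).trans (by linarith)
    · refine (min_le_right _ _).trans ?_
      rw [div_le_iff₀ hα0]
      nlinarith
  nlinarith

theorem alphac_pos {k : ℕ} (hk : 1 ≤ k) : 0 < alphac k := by
  have hK : (1 : ℝ) ≤ k := by exact_mod_cast hk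
  unfold alphac
  have hsecond : (0 : ℝ) ≤ ((k : ℝ) ^ 2 - k) / (π * (k : ℝ) ^ 2) := by
    apply div_nonneg _ (by positivity)
    nlinarith
  have hfirst : (0 : ℝ) < 1 / (k : ℝ) := by positivity
  linarith

theorem alphac_le_one {k : ℕ} (hk : 1 ≤ k) : alphac k ≤ 1 := by
  have hK : (1 : ℝ) ≤ k := by exact_mod_cast hk
  unfold alphac
  rw [div_add_div _ _ (by positivity) (by positivity), div_le_one (by positivity)]
  nlinarith [mul_nonneg (sub_nonneg.2 (by linarith [pi_gt_three] : (1 : ℝ) ≤ π))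
    (mul_nonneg (by linarith : (0 : ℝ) ≤ k) (sub_nonneg.2 hK))]

section Gradient

variable {m : ℕ}

noncomputable def nGCoeff (k : ℕ) (ws w : EuclideanSpace ℝ (Fin m)) : ℝ :=
  (1 / (k : ℝ) ^ 2) *
    ((k : ℝ) + ((k : ℝ) ^ 2 - k) / π
      - ((k : ℝ) * ‖ws‖ * Real.sin (angle w ws)) / (π * ‖w‖)
      - (((k : ℝ) ^ 2 - k) * ‖ws‖) / (π * ‖w‖))

theorem sub_smul_nG_eq {k : ℕ} {ws w : EuclideanSpace ℝ (Fin m)} (hw : w ≠ 0) (lam : ℝ) :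
    w - lam • nG k ws w = (1 - lam * nGCoeff k ws w) • w
      + (lam * (1 / (k : ℝ) ^ 2) * ((k : ℝ) / π * (π - angle w ws))) • ws := by
  simp only [nG, if_neg hw, nGCoeff]
  match_scalars <;> ring

theorem sin_angle_mul_le_alphac_sub_nGCoeff {k : ℕ} (hk : 1 ≤ k)
    (ws w : EuclideanSpace ℝ (Fin m)) :
    Real.sin (angle w ws) * (‖ws‖ / (π * ‖w‖)) ≤ alphac k - nGCoeff k ws w := by
  have hK : (1 : ℝ) ≤ k := by exact_mod_cast hk
  have hdiff : alphac k - nGCoeff k ws w = ((k : ℝ) * Real.sin (angle w ws) + ((k : ℝ) ^ 2 - k))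
      * (‖ws‖ / (π * ‖w‖)) / (k : ℝ) ^ 2 := by
    unfold alphac nGCoeff
    field_simp
    ring
  have hk2 : (0 : ℝ) ≤ (k : ℝ) ^ 2 - k := by nlinarith
  have hr : 0 ≤ ‖ws‖ / (π * ‖w‖) := by positivity
  have hs : Real.sin (angle w ws) ≤ 1 := sin_le_one _
  rw [hdiff, le_div_iff₀ (by positivity)]
  nlinarith [mul_nonneg (mul_nonneg hk2 hr) (sub_nonneg.2 hs)]

end Gradient

theorem stmt10_general (k m : ℕ) (hk : 1 ≤ k)
    (ws : EuclideanSpace ℝ (Fin m)) (hws : ws ≠ 0)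
    (lam : ℝ) (hlam0 : 0 < lam) (hlam1 : lam < 1)
    (wt : EuclideanSpace ℝ (Fin m)) (hwt : wt ≠ 0) :
    (Real.sin (angle wt ws) / Real.sin (angle (wt - lam • nG k ws wt) ws)) *
        min ‖wt‖ (‖ws‖ * Real.sin (angle wt ws) / (alphac k * π)) ≤
      ‖wt - lam • nG k ws wt‖ := by
  rw [sub_smul_nG_eq hwt]
  apply sin_angle_div_sin_angle_smul_add_smul_mul_le_norm hws
  have hcoeff := min_one_div_le_one_sub_mul (alphac_pos hk) (alphac_le_one hk)
    (sin_angle_mul_le_alphac_sub_nGCoeff hk ws wt) hlam0.le hlam1.le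
  calc min ‖wt‖ (‖ws‖ * Real.sin (angle wt ws) / (alphac k * π))
      = min 1 (Real.sin (angle wt ws) * (‖ws‖ / (π * ‖wt‖)) / alphac k) * ‖wt‖ := by
        have hwt0 : ‖wt‖ ≠ 0 := norm_ne_zero_iff.2 hwt
        have hα0 : alphac k ≠ 0 := (alphac_pos hk).ne'
        rw [min_mul_of_nonneg _ _ (norm_nonneg wt), one_mul]
        congr 1
        field_simp
    _ ≤ (1 - lam * nGCoeff k ws wt) * ‖wt‖ := mul_le_mul_of_nonneg_right hcoeff (norm_nonneg wt)
    _ ≤ |1 - lam * nGCoeff k ws wt| * ‖wt‖ :=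
        mul_le_mul_of_nonneg_right (le_abs_self _) (norm_nonneg wt)

/-- If `w_t ≠ 0`, `π/2 < θ_t < π` and `0 < λ < 1`, then the gradient descent iterate
`w_{t+1} = w_t − λ·G(w_t)` satisfies
`‖w_{t+1}‖ ≥ (sin θ_t / sin θ_{t+1}) · min {‖w_t‖, ‖w*‖ sin θ_t / (α(k)π)}`. -/
theorem stmt10 (k m : ℕ) (hk : 1 ≤ k) (hm : 2 ≤ m)
    (ws : EuclideanSpace ℝ (Fin m)) (hws : ws ≠ 0)
    (lam : ℝ) (hlam0 : 0 < lam) (hlam1 : lam < 1)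
    (wt : EuclideanSpace ℝ (Fin m)) (hwt : wt ≠ 0)
    (hθ0 : π / 2 < angle wt ws) (hθπ : angle wt ws < π) :
    (Real.sin (angle wt ws) / Real.sin (angle (wt - lam • nG k ws wt) ws)) *
        min ‖wt‖ (‖ws‖ * Real.sin (angle wt ws) / (alphac k * π)) ≤
      ‖wt - lam • nG k ws wt‖ :=
  stmt10_general k m hk ws hws lam hlam0 hlam1 wt hwt
end

section
/- Let k ≥ 1, m ≥ 2, let w* ∈ ℝ^m be nonzero, and let 0 < λ < 1/2. If w_t ≠ 0 and 0 < θ_t ≤ π/2, then the gradient descent iterate w_{t+1} = w_t − λ·G(w_t) satisfies ‖w_{t+1}‖ ≥ min{ ‖w_t‖, ‖w*‖/8 }. -/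
open scoped RealInnerProductSpace
open InnerProductGeometry Real Classical

lemma min_lem (X S lam a p : ℝ) (hX : 0 < X) (hlam0 : 0 < lam) (hlam1 : lam < 1/2)
    (ha0 : 0 ≤ a) (ha1 : a ≤ 1) (hp : S/8 ≤ p) (hS : 0 < S) :
    min X (S/8) ≤ X - lam*X*a + lam*p := by
  rcases le_total X (S/8) with h | h
  · rw [min_eq_left h]
    have h1 : X*a ≤ p := by nlinarith [mul_le_mul_of_nonneg_left ha1 hX.le]
    nlinarith [mul_le_mul_of_nonneg_left h1 hlam0.le]
  · rw [min_eq_right h]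
    nlinarith [mul_nonneg (show (0:ℝ) ≤ X - S/8 by linarith)
        (show (0:ℝ) ≤ 1 - lam*a by nlinarith [mul_le_mul_of_nonneg_left ha1 hlam0.le]),
      mul_nonneg (show (0:ℝ) ≤ p - S/8 by linarith) hlam0.le,
      mul_nonneg (show (0:ℝ) ≤ lam - lam*a by nlinarith [mul_le_mul_of_nonneg_left ha1 hlam0.le])
        (show (0:ℝ) ≤ S/8 by positivity)]

lemma key_ineq (K X S lam θ : ℝ) (hK : 1 ≤ K) (hX : 0 < X) (hS : 0 < S)
    (hlam0 : 0 < lam) (hlam1 : lam < 1/2) (hθ0 : 0 ≤ θ) (hθπ : θ ≤ π/2) :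
    min X (S/8) ≤
      (1 - lam * (K + (K^2-K)/π - (K*S*Real.sin θ)/(π*X) - ((K^2-K)*S)/(π*X)) / K^2) * X
      + (lam * ((K/π) * (π - θ)) / K^2) * (S * Real.cos θ) := by
  have hπ := Real.pi_pos
  have hπ3 := Real.pi_gt_three
  have hπ4 := Real.pi_le_four
  have hK0 : (0:ℝ) < K := by linarith
  have hθπ' : θ ≤ π := by linarith
  have hsin0 : 0 ≤ Real.sin θ := Real.sin_nonneg_of_nonneg_of_le_pi hθ0 hθπ'
  have hsin1 := Real.sin_le_one θ
  have hcos0 : 0 ≤ Real.cos θ := Real.cos_nonneg_of_mem_Icc ⟨by linarith, hθπ⟩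
  have hcos1 := Real.cos_le_one θ
  have hsc := Real.sin_sq_add_cos_sq θ
  have hT : 1 ≤ Real.sin θ + (π - θ) * Real.cos θ := by
    nlinarith [mul_nonneg hcos0 (by linarith : (0:ℝ) ≤ π - θ - 1),
      mul_nonneg hsin0 (by linarith : (0:ℝ) ≤ 1 - Real.sin θ),
      mul_nonneg hcos0 (by linarith : (0:ℝ) ≤ 1 - Real.cos θ)]
  have hα0 : 0 ≤ 1/K + (K-1)/(π*K) :=
    add_nonneg (by positivity) (div_nonneg (by linarith) (by positivity))
  have hα1 : 1/K + (K-1)/(π*K) ≤ 1 := by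
    rw [div_add_div _ _ (ne_of_gt hK0) (ne_of_gt (by positivity : (0:ℝ) < π*K)),
      div_le_one (by positivity)]
    nlinarith [mul_nonneg (by linarith : (0:ℝ) ≤ π - 1) (by linarith : (0:ℝ) ≤ K - 1)]
  have hFeq :
      (1 - lam * (K + (K^2-K)/π - (K*S*Real.sin θ)/(π*X) - ((K^2-K)*S)/(π*X)) / K^2) * X
      + (lam * ((K/π) * (π - θ)) / K^2) * (S * Real.cos θ)
      = X - lam*X*(1/K + (K-1)/(π*K))
        + (lam*S/(π*K)) * ((Real.sin θ + (π - θ) * Real.cos θ) + (K-1)) := by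
    field_simp
    ring
  rw [hFeq]
  have hQ : 0 ≤ lam*S/(π*K) := by positivity
  have hQK : (lam*S/(π*K))*K = lam*S/π := by field_simp
  have hQT : lam*S/π ≤ (lam*S/(π*K)) * ((Real.sin θ + (π - θ) * Real.cos θ) + (K-1)) := by
    nlinarith [mul_nonneg hQ (by linarith : (0:ℝ) ≤ Real.sin θ + (π - θ) * Real.cos θ - 1)]
  have hP : S/8 ≤ S/π := by
    rw [div_le_div_iff₀ (by norm_num) hπ]
    nlinarith
  have hmain := min_lem X S lam (1/K + (K-1)/(π*K)) (S/π) hX hlam0 hlam1 hα0 hα1 hP hS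
  refine le_trans hmain ?_
  have he : lam * (S/π) = lam*S/π := by ring
  rw [he]
  exact add_le_add le_rfl hQT

lemma norm_combo {n : ℕ} (wt ws : EuclideanSpace ℝ (Fin n)) (c d F : ℝ) (hd : 0 ≤ d)
    (hF : F = c * ‖wt‖ + d * (‖ws‖ * Real.cos (angle wt ws))) (hF0 : 0 ≤ F) :
    F ≤ ‖c • wt + d • ws‖ := by
  have hinner : (inner ℝ wt ws : ℝ) = Real.cos (angle wt ws) * (‖wt‖ * ‖ws‖) :=
    (InnerProductGeometry.cos_angle_mul_norm_mul_norm wt ws).symm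
  have hnorm : ‖c • wt + d • ws‖^2 = c^2*‖wt‖^2 + 2*(c*d*(inner ℝ wt ws : ℝ)) + d^2*‖ws‖^2 := by
    rw [norm_add_sq_real]
    simp only [norm_smul, Real.norm_eq_abs, real_inner_smul_left, real_inner_smul_right,
      mul_pow, sq_abs]
    ring
  have h2 : F^2 ≤ ‖c • wt + d • ws‖^2 := by
    rw [hnorm, hinner, hF]
    nlinarith [sq_nonneg (d*‖ws‖*Real.sin (angle wt ws)),
      Real.sin_sq_add_cos_sq (angle wt ws), sq_nonneg (d*‖ws‖)]
  nlinarith [h2, hF0, norm_nonneg (c • wt + d • ws)]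

/-- If `w_t ≠ 0`, `0 < θ_t ≤ π/2` and `0 < λ < 1/2`, then the gradient descent iterate
`w_{t+1} = w_t − λ·G(w_t)` satisfies `‖w_{t+1}‖ ≥ min {‖w_t‖, ‖w*‖/8}`. -/
theorem stmt11 (k m : ℕ) (hk : 1 ≤ k) (hm : 2 ≤ m)
    (ws : EuclideanSpace ℝ (Fin m)) (hws : ws ≠ 0)
    (lam : ℝ) (hlam0 : 0 < lam) (hlam1 : lam < 1 / 2)
    (wt : EuclideanSpace ℝ (Fin m)) (hwt : wt ≠ 0)
    (hθ0 : 0 < angle wt ws) (hθπ : angle wt ws ≤ π / 2) :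
    min ‖wt‖ (‖ws‖ / 8) ≤ ‖wt - lam • nG k ws wt‖ := by
  have hX : (0:ℝ) < ‖wt‖ := norm_pos_iff.mpr hwt
  have hS : (0:ℝ) < ‖ws‖ := norm_pos_iff.mpr hws
  have hK : (1:ℝ) ≤ (k:ℝ) := by exact_mod_cast hk
  have hθpi : angle wt ws ≤ π := angle_le_pi wt ws
  have hkey := key_ineq (k:ℝ) ‖wt‖ ‖ws‖ lam (angle wt ws) hK hX hS hlam0 hlam1
    (angle_nonneg wt ws) hθπ
  have hd0 : 0 ≤ lam * (((k:ℝ)/π) * (π - angle wt ws)) / (k:ℝ)^2 := by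
    apply div_nonneg _ (by positivity)
    apply mul_nonneg hlam0.le
    exact mul_nonneg (by positivity) (by linarith)
  have hrw : wt - lam • nG k ws wt =
      (1 - lam * ((k:ℝ) + ((k:ℝ)^2-(k:ℝ))/π - ((k:ℝ)*‖ws‖*Real.sin (angle wt ws))/(π*‖wt‖)
          - (((k:ℝ)^2-(k:ℝ))*‖ws‖)/(π*‖wt‖)) / (k:ℝ)^2) • wt
      + (lam * (((k:ℝ)/π) * (π - angle wt ws)) / (k:ℝ)^2) • ws := by
    simp only [nG, if_neg hwt]
    module
  rw [hrw]
  have hmin0 : 0 ≤ min ‖wt‖ (‖ws‖/8) := le_min hX.le (by positivity)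
  exact le_trans hkey (norm_combo wt ws _ _ _ hd0 rfl (le_trans hmin0 hkey))
end

section
/- Let k ≥ 2 and λ ∈ (0, 1/3). If w_t = (w_1, w_2) ∈ ℝ² lies in the open fourth quadrant (w_1 > 0 and w_2 < 0), then the gradient descent iterate w_{t+1} = w_t − λ·∇ℓ(w_t) is nonzero and also lies in the open fourth quadrant. -/
open scoped RealInnerProductSpace
open InnerProductGeometry Real

/-- The vector `(a, b) ∈ ℝ²`. -/
noncomputable def e2 (a b : ℝ) : EuclideanSpace ℝ (Fin 2) := WithLp.toLp 2 ![a, b]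

/-- The vector `(a, b, c) ∈ ℝ³`. -/
noncomputable def e3 (a b c : ℝ) : EuclideanSpace ℝ (Fin 3) := WithLp.toLp 2 ![a, b, c]

/-- The population loss for the overlapping architecture (filter size 2, stride 1):
with `ŵ = (−w*, w*)`, `w_r = (w_1,w_2,0)`, `w_l = (0,w_1,w_2)`, `ŵ_r = (−w*,w*,0)`,
`ŵ_l = (0,−w*,w*)`,
`ℓ(w) = (1/k²)·[(k/2 + (k²−3k+2)/(2π))·(‖w‖² + ‖ŵ‖²) − 2k·g(w,ŵ)
  + 2(k−1)·(g(w_r,w_l) + g(ŵ_r,ŵ_l) − g(w_l,ŵ_r) − g(w_r,ŵ_l)) − ((k²−3k+2)/π)·‖w‖·‖ŵ‖]`. -/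
noncomputable def lov (k : ℕ) (wstar : ℝ) (w : EuclideanSpace ℝ (Fin 2)) : ℝ :=
  (1 / (k : ℝ) ^ 2) *
    (((k : ℝ) / 2 + ((k : ℝ) ^ 2 - 3 * k + 2) / (2 * π)) *
        (‖w‖ ^ 2 + ‖e2 (-wstar) wstar‖ ^ 2)
      - 2 * (k : ℝ) * g w (e2 (-wstar) wstar)
      + 2 * ((k : ℝ) - 1) *
          (g (e3 (w 0) (w 1) 0) (e3 0 (w 0) (w 1))
            + g (e3 (-wstar) wstar 0) (e3 0 (-wstar) wstar)
            - g (e3 0 (w 0) (w 1)) (e3 (-wstar) wstar 0)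
            - g (e3 (w 0) (w 1) 0) (e3 0 (-wstar) wstar))
      - (((k : ℝ) ^ 2 - 3 * k + 2) / π) * ‖w‖ * ‖e2 (-wstar) wstar‖)

/-- The gradient `∇ℓ(w)` of the overlap population loss at `w ≠ 0`:
with `w_p = (w_2,w_1)`, `ŵ_{p1} = (0,−w*)`, `ŵ_{p2} = (w*,0)`,
`∇ℓ(w) = (1/k²)·[(k + (k²−3k+2)/π + (2(k−1)/π) sin θ_{w_r,w_l})·w
  + ((k−1)/π)(π − θ_{w_r,w_l})·w_p − ((k²−3k+2)‖ŵ‖/(π‖w‖))·w − (k‖ŵ‖ sin θ_{w,ŵ}/(π‖w‖))·w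
  − (k/π)(π − θ_{w,ŵ})·ŵ − ((k−1)‖ŵ‖ sin θ_{w_l,ŵ_r}/(π‖w‖))·w
  − ((k−1)/π)(π − θ_{w_l,ŵ_r})·ŵ_{p2} − ((k−1)‖ŵ‖ sin θ_{w_r,ŵ_l}/(π‖w‖))·w
  − ((k−1)/π)(π − θ_{w_r,ŵ_l})·ŵ_{p1}]`. -/
noncomputable def gov (k : ℕ) (wstar : ℝ) (w : EuclideanSpace ℝ (Fin 2)) :
    EuclideanSpace ℝ (Fin 2) :=
  (1 / (k : ℝ) ^ 2) •
    ((((k : ℝ) + ((k : ℝ) ^ 2 - 3 * k + 2) / π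
        + (2 * ((k : ℝ) - 1) / π) *
            Real.sin (angle (e3 (w 0) (w 1) 0) (e3 0 (w 0) (w 1)))) • w
      + ((((k : ℝ) - 1) / π) *
            (π - angle (e3 (w 0) (w 1) 0) (e3 0 (w 0) (w 1)))) • e2 (w 1) (w 0)
      - ((((k : ℝ) ^ 2 - 3 * k + 2) * ‖e2 (-wstar) wstar‖) / (π * ‖w‖)) • w
      - (((k : ℝ) * ‖e2 (-wstar) wstar‖ * Real.sin (angle w (e2 (-wstar) wstar)))
            / (π * ‖w‖)) • w
      - (((k : ℝ) / π) * (π - angle w (e2 (-wstar) wstar))) • e2 (-wstar) wstar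
      - ((((k : ℝ) - 1) * ‖e2 (-wstar) wstar‖ *
            Real.sin (angle (e3 0 (w 0) (w 1)) (e3 (-wstar) wstar 0))) / (π * ‖w‖)) • w
      - ((((k : ℝ) - 1) / π) *
            (π - angle (e3 0 (w 0) (w 1)) (e3 (-wstar) wstar 0))) • e2 wstar 0
      - ((((k : ℝ) - 1) * ‖e2 (-wstar) wstar‖ *
            Real.sin (angle (e3 (w 0) (w 1) 0) (e3 0 (-wstar) wstar))) / (π * ‖w‖)) • w
      - ((((k : ℝ) - 1) / π) *
            (π - angle (e3 (w 0) (w 1) 0) (e3 0 (-wstar) wstar))) • e2 0 (-wstar)))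

set_option maxHeartbeats 1000000 in
private lemma scalar_key (K lam a b M N wst s1 s2 s3 s4 t1 t2 t3 t4 : ℝ)
    (hK : 2 ≤ K) (hlam0 : 0 < lam) (hlam1 : lam < 1 / 3)
    (ha : 0 < a) (hb : b < 0) (hwst : 0 < wst) (hM : 0 ≤ M) (hN : 0 < N)
    (hs1 : 0 ≤ s1) (hs1' : s1 ≤ 1) (hs2 : 0 ≤ s2) (hs3 : 0 ≤ s3) (hs4 : 0 ≤ s4)
    (ht1 : 0 ≤ t1) (ht1' : t1 ≤ π)
    (ht2 : 3 * π / 4 ≤ t2) (ht2' : t2 ≤ π)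
    (ht3 : 0 ≤ t3) (ht3' : t3 ≤ π / 2)
    (ht4 : 0 ≤ t4) (ht4' : t4 ≤ π / 2) :
    lam * ((1 / K ^ 2) * ((K + (K ^ 2 - 3 * K + 2) / π + (2 * (K - 1) / π) * s1) * a
        + (((K - 1) / π) * (π - t1)) * b
        - ((K ^ 2 - 3 * K + 2) * M / (π * N)) * a
        - (K * M * s2 / (π * N)) * a
        - (((K / π) * (π - t2))) * (-wst)
        - ((K - 1) * M * s3 / (π * N)) * a
        - (((K - 1) / π) * (π - t3)) * wst
        - ((K - 1) * M * s4 / (π * N)) * a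
        - (((K - 1) / π) * (π - t4)) * 0)) < a ∧
    b < lam * ((1 / K ^ 2) * ((K + (K ^ 2 - 3 * K + 2) / π + (2 * (K - 1) / π) * s1) * b
        + (((K - 1) / π) * (π - t1)) * a
        - ((K ^ 2 - 3 * K + 2) * M / (π * N)) * b
        - (K * M * s2 / (π * N)) * b
        - (((K / π) * (π - t2))) * wst
        - ((K - 1) * M * s3 / (π * N)) * b
        - (((K - 1) / π) * (π - t3)) * 0
        - ((K - 1) * M * s4 / (π * N)) * b
        - (((K - 1) / π) * (π - t4)) * (-wst))) := by
  have hπ : (0 : ℝ) < π := Real.pi_pos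
  have hπ3 : (3 : ℝ) < π := Real.pi_gt_three
  have hK0 : (0 : ℝ) < K := by linarith
  have hQ : (0 : ℝ) ≤ K ^ 2 - 3 * K + 2 := by nlinarith
  have hcoefπ : (0 : ℝ) ≤ (K - 1) / π := div_nonneg (by linarith) hπ.le
  have hKπ : (0 : ℝ) ≤ K / π := div_nonneg hK0.le hπ.le
  have e5 : (K / π) * (π - t2) ≤ K / 4 := by
    have h1 : (K / π) * (π - t2) ≤ (K / π) * (π / 4) :=
      mul_le_mul_of_nonneg_left (by linarith) hKπ
    have h2 : (K / π) * (π / 4) = K / 4 := by field_simp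
    linarith
  have e7 : (K - 1) / 2 ≤ ((K - 1) / π) * (π - t3) := by
    have h1 : ((K - 1) / π) * (π / 2) ≤ ((K - 1) / π) * (π - t3) :=
      mul_le_mul_of_nonneg_left (by linarith) hcoefπ
    have h2 : ((K - 1) / π) * (π / 2) = (K - 1) / 2 := by field_simp
    linarith
  have e9 : (K - 1) / 2 ≤ ((K - 1) / π) * (π - t4) := by
    have h1 : ((K - 1) / π) * (π / 2) ≤ ((K - 1) / π) * (π - t4) :=
      mul_le_mul_of_nonneg_left (by linarith) hcoefπ
    have h2 : ((K - 1) / π) * (π / 2) = (K - 1) / 2 := by field_simp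
    linarith
  have d1 : (2 * (K - 1) / π) * s1 ≤ 2 * (K - 1) / π := by
    have h := mul_le_mul_of_nonneg_left hs1' (show (0:ℝ) ≤ 2 * (K - 1) / π from
      div_nonneg (by linarith) hπ.le)
    simpa using h
  have hcoef : lam * ((1 / K ^ 2) * (K + (K ^ 2 - 3 * K + 2) / π + 2 * (K - 1) / π)) < 1 := by
    have h1 : (K ^ 2 - K) / π ≤ (K ^ 2 - K) / 3 := by
      rw [div_le_div_iff₀ hπ (by norm_num)]
      nlinarith
    have h0' : (K ^ 2 - 3 * K + 2) / π + 2 * (K - 1) / π = (K ^ 2 - K) / π := by ring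
    have h2 : K + (K ^ 2 - 3 * K + 2) / π + 2 * (K - 1) / π ≤ K ^ 2 := by nlinarith
    have hpos : (0 : ℝ) < 1 / K ^ 2 := by positivity
    calc lam * ((1 / K ^ 2) * (K + (K ^ 2 - 3 * K + 2) / π + 2 * (K - 1) / π))
        ≤ lam * ((1 / K ^ 2) * K ^ 2) :=
          mul_le_mul_of_nonneg_left (mul_le_mul_of_nonneg_left h2 hpos.le) hlam0.le
      _ = lam := by field_simp
      _ < 1 := by linarith
  have hpos : (0 : ℝ) < 1 / K ^ 2 := by positivity
  have p9 : K / 4 * wst ≤ (K - 1) / 2 * wst :=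
    mul_le_mul_of_nonneg_right (by linarith) hwst.le
  constructor
  · have p1 : (K + (K ^ 2 - 3 * K + 2) / π + (2 * (K - 1) / π) * s1) * a
        ≤ (K + (K ^ 2 - 3 * K + 2) / π + 2 * (K - 1) / π) * a :=
      mul_le_mul_of_nonneg_right (by linarith) ha.le
    have p2 : (((K - 1) / π) * (π - t1)) * b ≤ 0 := by
      have := mul_nonneg (mul_nonneg hcoefπ (by linarith : (0:ℝ) ≤ π - t1))
        (neg_nonneg.mpr hb.le)
      nlinarith [this]
    have p3 : 0 ≤ ((K ^ 2 - 3 * K + 2) * M / (π * N)) * a :=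
      mul_nonneg (div_nonneg (mul_nonneg hQ hM) (by positivity)) ha.le
    have p4 : 0 ≤ (K * M * s2 / (π * N)) * a :=
      mul_nonneg (div_nonneg (mul_nonneg (mul_nonneg hK0.le hM) hs2) (by positivity)) ha.le
    have p6 : 0 ≤ ((K - 1) * M * s3 / (π * N)) * a :=
      mul_nonneg (div_nonneg (mul_nonneg (mul_nonneg (by linarith) hM) hs3) (by positivity)) ha.le
    have p8 : 0 ≤ ((K - 1) * M * s4 / (π * N)) * a :=
      mul_nonneg (div_nonneg (mul_nonneg (mul_nonneg (by linarith) hM) hs4) (by positivity)) ha.le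
    have p5 : (K / π) * (π - t2) * wst ≤ K / 4 * wst :=
      mul_le_mul_of_nonneg_right e5 hwst.le
    have p7 : (K - 1) / 2 * wst ≤ (((K - 1) / π) * (π - t3)) * wst :=
      mul_le_mul_of_nonneg_right e7 hwst.le
    have hT0 : ((K + (K ^ 2 - 3 * K + 2) / π + (2 * (K - 1) / π) * s1) * a
        + (((K - 1) / π) * (π - t1)) * b
        - ((K ^ 2 - 3 * K + 2) * M / (π * N)) * a
        - (K * M * s2 / (π * N)) * a
        - (((K / π) * (π - t2))) * (-wst)
        - ((K - 1) * M * s3 / (π * N)) * a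
        - (((K - 1) / π) * (π - t3)) * wst
        - ((K - 1) * M * s4 / (π * N)) * a
        - (((K - 1) / π) * (π - t4)) * 0)
        ≤ (K + (K ^ 2 - 3 * K + 2) / π + 2 * (K - 1) / π) * a := by
      linarith [p1, p2, p3, p4, p5, p6, p7, p8, p9]
    have h1 := mul_le_mul_of_nonneg_left (mul_le_mul_of_nonneg_left hT0 hpos.le) hlam0.le
    have h2 : 0 < a * (1 - lam * ((1 / K ^ 2) * (K + (K ^ 2 - 3 * K + 2) / π + 2 * (K - 1) / π))) :=
      mul_pos ha (by linarith)
    linarith [h1, h2]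
  · have q1 : (K + (K ^ 2 - 3 * K + 2) / π + 2 * (K - 1) / π) * b
        ≤ (K + (K ^ 2 - 3 * K + 2) / π + (2 * (K - 1) / π) * s1) * b := by
      nlinarith [mul_nonneg (sub_nonneg.mpr d1) (neg_nonneg.mpr hb.le)]
    have q2 : 0 ≤ (((K - 1) / π) * (π - t1)) * a :=
      mul_nonneg (mul_nonneg hcoefπ (by linarith)) ha.le
    have q3 : ((K ^ 2 - 3 * K + 2) * M / (π * N)) * b ≤ 0 := by
      nlinarith [mul_nonneg (div_nonneg (mul_nonneg hQ hM) (by positivity : (0:ℝ) ≤ π * N))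
        (neg_nonneg.mpr hb.le)]
    have q4 : (K * M * s2 / (π * N)) * b ≤ 0 := by
      nlinarith [mul_nonneg (div_nonneg (mul_nonneg (mul_nonneg hK0.le hM) hs2)
        (by positivity : (0:ℝ) ≤ π * N)) (neg_nonneg.mpr hb.le)]
    have q6 : ((K - 1) * M * s3 / (π * N)) * b ≤ 0 := by
      nlinarith [mul_nonneg (div_nonneg (mul_nonneg (mul_nonneg (by linarith : (0:ℝ) ≤ K - 1) hM)
        hs3) (by positivity : (0:ℝ) ≤ π * N)) (neg_nonneg.mpr hb.le)]
    have q8 : ((K - 1) * M * s4 / (π * N)) * b ≤ 0 := by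
      nlinarith [mul_nonneg (div_nonneg (mul_nonneg (mul_nonneg (by linarith : (0:ℝ) ≤ K - 1) hM)
        hs4) (by positivity : (0:ℝ) ≤ π * N)) (neg_nonneg.mpr hb.le)]
    have q5 : (K / π) * (π - t2) * wst ≤ K / 4 * wst :=
      mul_le_mul_of_nonneg_right e5 hwst.le
    have q9 : (K - 1) / 2 * wst ≤ (((K - 1) / π) * (π - t4)) * wst :=
      mul_le_mul_of_nonneg_right e9 hwst.le
    have hT1 : (K + (K ^ 2 - 3 * K + 2) / π + 2 * (K - 1) / π) * b
        ≤ ((K + (K ^ 2 - 3 * K + 2) / π + (2 * (K - 1) / π) * s1) * b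
        + (((K - 1) / π) * (π - t1)) * a
        - ((K ^ 2 - 3 * K + 2) * M / (π * N)) * b
        - (K * M * s2 / (π * N)) * b
        - (((K / π) * (π - t2))) * wst
        - ((K - 1) * M * s3 / (π * N)) * b
        - (((K - 1) / π) * (π - t3)) * 0
        - ((K - 1) * M * s4 / (π * N)) * b
        - (((K - 1) / π) * (π - t4)) * (-wst)) := by
      linarith [q1, q2, q3, q4, q5, q6, q8, q9, p9]
    have h1 := mul_le_mul_of_nonneg_left (mul_le_mul_of_nonneg_left hT1 hpos.le) hlam0.le
    have h2 : b * (1 - lam * ((1 / K ^ 2) * (K + (K ^ 2 - 3 * K + 2) / π + 2 * (K - 1) / π))) < 0 :=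
      mul_neg_of_neg_of_pos hb (by linarith)
    linarith [h1, h2]

set_option maxHeartbeats 1000000 in
/-- If `w_t` lies in the open fourth quadrant, then for `k ≥ 2` and `λ ∈ (0, 1/3)` the
gradient descent iterate `w_{t+1} = w_t − λ·∇ℓ(w_t)` is nonzero and also lies in the open
fourth quadrant. -/
theorem stmt16 (k : ℕ) (hk : 2 ≤ k) (wstar : ℝ) (hwstar : 0 < wstar)
    (lam : ℝ) (hlam0 : 0 < lam) (hlam1 : lam < 1 / 3)
    (wt : EuclideanSpace ℝ (Fin 2)) (hq1 : 0 < wt 0) (hq2 : wt 1 < 0) :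
    wt - lam • gov k wstar wt ≠ 0 ∧
      0 < (wt - lam • gov k wstar wt) 0 ∧ (wt - lam • gov k wstar wt) 1 < 0 := by
  have hπ : (0 : ℝ) < π := Real.pi_pos
  have hK2 : (2 : ℝ) ≤ (k : ℝ) := by exact_mod_cast hk
  have hwne : wt ≠ 0 := by
    intro h
    rw [h] at hq1
    simp at hq1
  have hN : 0 < ‖wt‖ := norm_pos_iff.mpr hwne
  -- inner products
  have hinner2 : ⟪wt, e2 (-wstar) wstar⟫ = wt 0 * (-wstar) + wt 1 * wstar := by
    simp [e2, PiLp.inner_apply, Fin.sum_univ_two, RCLike.inner_apply, conj_trivial, mul_comm]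
  have hinner3 : ⟪e3 0 (wt 0) (wt 1), e3 (-wstar) wstar 0⟫ = wt 0 * wstar := by
    simp [e3, PiLp.inner_apply, Fin.sum_univ_three, RCLike.inner_apply, conj_trivial, mul_comm]
  have hinner4 : ⟪e3 (wt 0) (wt 1) 0, e3 0 (-wstar) wstar⟫ = wt 1 * (-wstar) := by
    simp [e3, PiLp.inner_apply, Fin.sum_univ_three, RCLike.inner_apply, conj_trivial, mul_comm]
  -- norms
  have hMv : ‖e2 (-wstar) wstar‖ = Real.sqrt 2 * wstar := by
    rw [show ‖e2 (-wstar) wstar‖ = Real.sqrt ((-wstar) ^ 2 + wstar ^ 2) by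
      simp [e2, EuclideanSpace.norm_eq, Fin.sum_univ_two], show ((-wstar) ^ 2 + wstar ^ 2 : ℝ)
      = 2 * wstar ^ 2 by ring, Real.sqrt_mul (by norm_num : (0:ℝ) ≤ 2), Real.sqrt_sq hwstar.le]
  have hNv : ‖wt‖ = Real.sqrt ((wt 0) ^ 2 + (wt 1) ^ 2) := by
    simp [EuclideanSpace.norm_eq, Fin.sum_univ_two]
  have hab : ‖wt‖ ≤ wt 0 - wt 1 := by
    rw [hNv]
    calc Real.sqrt ((wt 0) ^ 2 + (wt 1) ^ 2) ≤ Real.sqrt ((wt 0 - wt 1) ^ 2) :=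
        Real.sqrt_le_sqrt (by nlinarith)
      _ = wt 0 - wt 1 := Real.sqrt_sq (by linarith)
  -- angle t2 lower bound
  have hcos2 : Real.cos (angle wt (e2 (-wstar) wstar)) ≤ -(Real.sqrt 2 / 2) := by
    rw [cos_angle, hinner2, hMv]
    have hden : (0:ℝ) < ‖wt‖ * (Real.sqrt 2 * wstar) :=
      mul_pos hN (mul_pos (Real.sqrt_pos.mpr (by norm_num)) hwstar)
    rw [div_le_iff₀ hden]
    have h2 : Real.sqrt 2 * Real.sqrt 2 = 2 := Real.mul_self_sqrt (by norm_num)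
    have h3 : -(Real.sqrt 2 / 2) * (‖wt‖ * (Real.sqrt 2 * wstar)) = -(‖wt‖ * wstar) := by
      rw [show -(Real.sqrt 2 / 2) * (‖wt‖ * (Real.sqrt 2 * wstar))
        = -(Real.sqrt 2 * Real.sqrt 2 * (‖wt‖ * wstar) / 2) by ring, h2]
      ring
    rw [h3]
    nlinarith [mul_le_mul_of_nonneg_right hab hwstar.le]
  have ht2 : 3 * π / 4 ≤ angle wt (e2 (-wstar) wstar) := by
    by_contra h
    push_neg at h
    have h1 : Real.cos (3 * π / 4) < Real.cos (angle wt (e2 (-wstar) wstar)) :=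
      Real.cos_lt_cos_of_nonneg_of_le_pi (angle_nonneg _ _) (by linarith) h
    have h2 : Real.cos (3 * π / 4) = -(Real.sqrt 2 / 2) := by
      rw [show (3 * π / 4 : ℝ) = π - π / 4 by ring, Real.cos_pi_sub, Real.cos_pi_div_four]
    linarith
  -- angles t3, t4 upper bounds
  have ht3 : angle (e3 0 (wt 0) (wt 1)) (e3 (-wstar) wstar 0) ≤ π / 2 := by
    by_contra h
    push_neg at h
    have h1 : Real.cos (angle (e3 0 (wt 0) (wt 1)) (e3 (-wstar) wstar 0)) < Real.cos (π / 2) :=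
      Real.cos_lt_cos_of_nonneg_of_le_pi (by positivity) (angle_le_pi _ _) h
    rw [Real.cos_pi_div_two] at h1
    have h2 : 0 ≤ Real.cos (angle (e3 0 (wt 0) (wt 1)) (e3 (-wstar) wstar 0)) := by
      rw [cos_angle, hinner3]
      exact div_nonneg (mul_nonneg hq1.le hwstar.le) (mul_nonneg (norm_nonneg _) (norm_nonneg _))
    linarith
  have ht4 : angle (e3 (wt 0) (wt 1) 0) (e3 0 (-wstar) wstar) ≤ π / 2 := by
    by_contra h
    push_neg at h
    have h1 : Real.cos (angle (e3 (wt 0) (wt 1) 0) (e3 0 (-wstar) wstar)) < Real.cos (π / 2) :=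
      Real.cos_lt_cos_of_nonneg_of_le_pi (by positivity) (angle_le_pi _ _) h
    rw [Real.cos_pi_div_two] at h1
    have h2 : 0 ≤ Real.cos (angle (e3 (wt 0) (wt 1) 0) (e3 0 (-wstar) wstar)) := by
      rw [cos_angle, hinner4]
      exact div_nonneg (by nlinarith) (mul_nonneg (norm_nonneg _) (norm_nonneg _))
    linarith
  -- apply the scalar lemma
  obtain ⟨key0, key1⟩ := scalar_key (k : ℝ) lam (wt 0) (wt 1) ‖e2 (-wstar) wstar‖ ‖wt‖ wstar
    (Real.sin (angle (e3 (wt 0) (wt 1) 0) (e3 0 (wt 0) (wt 1))))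
    (Real.sin (angle wt (e2 (-wstar) wstar)))
    (Real.sin (angle (e3 0 (wt 0) (wt 1)) (e3 (-wstar) wstar 0)))
    (Real.sin (angle (e3 (wt 0) (wt 1) 0) (e3 0 (-wstar) wstar)))
    (angle (e3 (wt 0) (wt 1) 0) (e3 0 (wt 0) (wt 1)))
    (angle wt (e2 (-wstar) wstar))
    (angle (e3 0 (wt 0) (wt 1)) (e3 (-wstar) wstar 0))
    (angle (e3 (wt 0) (wt 1) 0) (e3 0 (-wstar) wstar))
    hK2 hlam0 hlam1 hq1 hq2 hwstar (norm_nonneg _) hN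
    (Real.sin_nonneg_of_nonneg_of_le_pi (angle_nonneg _ _) (angle_le_pi _ _))
    (Real.sin_le_one _)
    (Real.sin_nonneg_of_nonneg_of_le_pi (angle_nonneg _ _) (angle_le_pi _ _))
    (Real.sin_nonneg_of_nonneg_of_le_pi (angle_nonneg _ _) (angle_le_pi _ _))
    (Real.sin_nonneg_of_nonneg_of_le_pi (angle_nonneg _ _) (angle_le_pi _ _))
    (angle_nonneg _ _) (angle_le_pi _ _)
    ht2 (angle_le_pi _ _)
    (angle_nonneg _ _) ht3
    (angle_nonneg _ _) ht4
  -- coordinate unfolds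
  have h0 : (wt - lam • gov k wstar wt) 0 =
      wt 0 - lam * ((1 / (k : ℝ) ^ 2) *
        (((k : ℝ) + ((k : ℝ) ^ 2 - 3 * (k : ℝ) + 2) / π
            + (2 * ((k : ℝ) - 1) / π) *
              Real.sin (angle (e3 (wt 0) (wt 1) 0) (e3 0 (wt 0) (wt 1)))) * wt 0
          + ((((k : ℝ) - 1) / π) * (π - angle (e3 (wt 0) (wt 1) 0) (e3 0 (wt 0) (wt 1)))) * wt 1
          - (((k : ℝ) ^ 2 - 3 * (k : ℝ) + 2) * ‖e2 (-wstar) wstar‖ / (π * ‖wt‖)) * wt 0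
          - ((k : ℝ) * ‖e2 (-wstar) wstar‖ * Real.sin (angle wt (e2 (-wstar) wstar))
              / (π * ‖wt‖)) * wt 0
          - (((k : ℝ) / π) * (π - angle wt (e2 (-wstar) wstar))) * (-wstar)
          - (((k : ℝ) - 1) * ‖e2 (-wstar) wstar‖ *
              Real.sin (angle (e3 0 (wt 0) (wt 1)) (e3 (-wstar) wstar 0)) / (π * ‖wt‖)) * wt 0
          - ((((k : ℝ) - 1) / π) *
              (π - angle (e3 0 (wt 0) (wt 1)) (e3 (-wstar) wstar 0))) * wstar
          - (((k : ℝ) - 1) * ‖e2 (-wstar) wstar‖ *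
              Real.sin (angle (e3 (wt 0) (wt 1) 0) (e3 0 (-wstar) wstar)) / (π * ‖wt‖)) * wt 0
          - ((((k : ℝ) - 1) / π) *
              (π - angle (e3 (wt 0) (wt 1) 0) (e3 0 (-wstar) wstar))) * 0)) := by
    simp [gov, e2, PiLp.sub_apply, PiLp.add_apply, PiLp.smul_apply, smul_eq_mul]
  have h1 : (wt - lam • gov k wstar wt) 1 =
      wt 1 - lam * ((1 / (k : ℝ) ^ 2) *
        (((k : ℝ) + ((k : ℝ) ^ 2 - 3 * (k : ℝ) + 2) / π
            + (2 * ((k : ℝ) - 1) / π) *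
              Real.sin (angle (e3 (wt 0) (wt 1) 0) (e3 0 (wt 0) (wt 1)))) * wt 1
          + ((((k : ℝ) - 1) / π) * (π - angle (e3 (wt 0) (wt 1) 0) (e3 0 (wt 0) (wt 1)))) * wt 0
          - (((k : ℝ) ^ 2 - 3 * (k : ℝ) + 2) * ‖e2 (-wstar) wstar‖ / (π * ‖wt‖)) * wt 1
          - ((k : ℝ) * ‖e2 (-wstar) wstar‖ * Real.sin (angle wt (e2 (-wstar) wstar))
              / (π * ‖wt‖)) * wt 1
          - (((k : ℝ) / π) * (π - angle wt (e2 (-wstar) wstar))) * wstar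
          - (((k : ℝ) - 1) * ‖e2 (-wstar) wstar‖ *
              Real.sin (angle (e3 0 (wt 0) (wt 1)) (e3 (-wstar) wstar 0)) / (π * ‖wt‖)) * wt 1
          - ((((k : ℝ) - 1) / π) *
              (π - angle (e3 0 (wt 0) (wt 1)) (e3 (-wstar) wstar 0))) * 0
          - (((k : ℝ) - 1) * ‖e2 (-wstar) wstar‖ *
              Real.sin (angle (e3 (wt 0) (wt 1) 0) (e3 0 (-wstar) wstar)) / (π * ‖wt‖)) * wt 1
          - ((((k : ℝ) - 1) / π) *
              (π - angle (e3 (wt 0) (wt 1) 0) (e3 0 (-wstar) wstar))) * (-wstar))) := by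
    simp [gov, e2, PiLp.sub_apply, PiLp.add_apply, PiLp.smul_apply, smul_eq_mul]
  have pos0 : 0 < (wt - lam • gov k wstar wt) 0 := by
    rw [h0]; linarith [key0]
  have neg1 : (wt - lam • gov k wstar wt) 1 < 0 := by
    rw [h1]; linarith [key1]
  refine ⟨?_, pos0, neg1⟩
  intro h
  have : (wt - lam • gov k wstar wt) 0 = 0 := by rw [h]; rfl
  linarith
end

section
/- Let w = (w_1, w_2) ∈ ℝ² with w_1 ≥ 0 and w_2 ≤ 0, and set w_r = (w_1,w_2,0) and w_l = (0,w_1,w_2) in ℝ³. Then g(w_l, w_r) ≥ (1/(2π))·(√3/2 − π/6)·‖w‖². -/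
open scoped RealInnerProductSpace
open InnerProductGeometry Real

/-! Both vectors have norm `‖w‖` and inner product `w₁w₂ ≥ -‖w‖²/2`, so the angle `θ` between
them is at most `2π/3`. On `[0, π]` the map `θ ↦ sin θ + (π - θ) cos θ` has derivative
`-(π - θ) sin θ ≤ 0`, so its value at `θ` is at least its value `√3/2 - π/6` at `2π/3`. -/

open Set

lemma cos_two_pi_div_three : cos (2 * π / 3) = -(1 / 2) := by
  rw [show 2 * π / 3 = π - π / 3 by ring, cos_pi_sub, cos_pi_div_three]

lemma sin_two_pi_div_three : sin (2 * π / 3) = √3 / 2 := by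
  rw [show 2 * π / 3 = π - π / 3 by ring, sin_pi_sub, sin_pi_div_three]

lemma hasDerivAt_sin_add_pi_sub_mul_cos (x : ℝ) :
    HasDerivAt (fun θ => sin θ + (π - θ) * cos θ) (-((π - x) * sin x)) x := by
  refine ((hasDerivAt_sin x).add
    (((hasDerivAt_id x).const_sub π).mul (hasDerivAt_cos x))).congr_deriv ?_
  simp only [id]
  ring

lemma antitoneOn_sin_add_pi_sub_mul_cos :
    AntitoneOn (fun θ => sin θ + (π - θ) * cos θ) (Icc 0 π) := by
  apply antitoneOn_of_deriv_nonpos (convex_Icc 0 π)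
  · fun_prop
  · exact fun x _ => (hasDerivAt_sin_add_pi_sub_mul_cos x).differentiableAt.differentiableWithinAt
  · intro x hx
    rw [interior_Icc] at hx
    rw [(hasDerivAt_sin_add_pi_sub_mul_cos x).deriv, neg_nonpos]
    exact mul_nonneg (sub_nonneg.2 hx.2.le) (sin_nonneg_of_nonneg_of_le_pi hx.1.le hx.2.le)

section InnerProductSpace

variable {E : Type*} [NormedAddCommGroup E] [InnerProductSpace ℝ E]

lemma angle_le_two_pi_div_three_of_neg_half_le_inner {x y : E}
    (h : -(‖x‖ * ‖y‖) / 2 ≤ ⟪x, y⟫) : angle x y ≤ 2 * π / 3 := by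
  have hπ := pi_pos
  rw [← strictAntiOn_cos.le_iff_ge ⟨by positivity, by linarith⟩
    ⟨angle_nonneg x y, angle_le_pi x y⟩, cos_two_pi_div_three, cos_angle]
  rcases (mul_nonneg (norm_nonneg x) (norm_nonneg y)).eq_or_lt with hxy | hxy
  · rw [← hxy, div_zero]
    norm_num
  · rw [le_div_iff₀ hxy]
    linarith

lemma mul_norm_mul_norm_le_g_of_angle_le_two_pi_div_three {x y : E}
    (h : angle x y ≤ 2 * π / 3) :
    1 / (2 * π) * (√3 / 2 - π / 6) * ‖x‖ * ‖y‖ ≤ g x y := by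
  have hπ := pi_pos
  have hmono := antitoneOn_sin_add_pi_sub_mul_cos ⟨angle_nonneg x y, angle_le_pi x y⟩
    ⟨by positivity, by linarith⟩ h
  simp only [sin_two_pi_div_three, cos_two_pi_div_three] at hmono
  have hfac : 0 ≤ 1 / (2 * π) * ‖x‖ * ‖y‖ := by positivity
  rw [g]
  linarith [mul_le_mul_of_nonneg_left hmono hfac]

end InnerProductSpace

lemma norm_e2_sq (a b : ℝ) : ‖e2 a b‖ ^ 2 = a ^ 2 + b ^ 2 := by
  simp [e2, EuclideanSpace.norm_sq_eq, Fin.sum_univ_two]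

lemma norm_e3_zero_left (a b : ℝ) : ‖e3 0 a b‖ = ‖e2 a b‖ := by
  simp [e2, e3, EuclideanSpace.norm_eq, Fin.sum_univ_three, Fin.sum_univ_two]

lemma norm_e3_zero_right (a b : ℝ) : ‖e3 a b 0‖ = ‖e2 a b‖ := by
  simp [e2, e3, EuclideanSpace.norm_eq, Fin.sum_univ_three, Fin.sum_univ_two]

lemma inner_e3_zero_left_e3_zero_right (a b : ℝ) : ⟪e3 0 a b, e3 a b 0⟫ = a * b := by
  simp [e3, PiLp.inner_apply, Fin.sum_univ_three, mul_comm]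

theorem stmt18_general (w1 w2 : ℝ) :
    (1 / (2 * π)) * (Real.sqrt 3 / 2 - π / 6) * ‖e2 w1 w2‖ ^ 2 ≤
      g (e3 0 w1 w2) (e3 w1 w2 0) := by
  have hinner : -(‖e3 0 w1 w2‖ * ‖e3 w1 w2 0‖) / 2 ≤ ⟪e3 0 w1 w2, e3 w1 w2 0⟫ := by
    rw [norm_e3_zero_left, norm_e3_zero_right, ← sq, norm_e2_sq, inner_e3_zero_left_e3_zero_right]
    nlinarith [sq_nonneg (w1 + w2)]
  calc (1 / (2 * π)) * (√3 / 2 - π / 6) * ‖e2 w1 w2‖ ^ 2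
      = 1 / (2 * π) * (√3 / 2 - π / 6) * ‖e3 0 w1 w2‖ * ‖e3 w1 w2 0‖ := by
        rw [norm_e3_zero_left, norm_e3_zero_right]
        ring
    _ ≤ g (e3 0 w1 w2) (e3 w1 w2 0) :=
        mul_norm_mul_norm_le_g_of_angle_le_two_pi_div_three
          (angle_le_two_pi_div_three_of_neg_half_le_inner hinner)

/-- For `w = (w_1, w_2)` in the closed fourth quadrant, `w_r = (w_1,w_2,0)` and
`w_l = (0,w_1,w_2)`, one has `g(w_l, w_r) ≥ (1/(2π))·(√3/2 − π/6)·‖w‖²`. -/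
theorem stmt18 (w1 w2 : ℝ) (h1 : 0 ≤ w1) (h2 : w2 ≤ 0) :
    (1 / (2 * π)) * (Real.sqrt 3 / 2 - π / 6) * ‖e2 w1 w2‖ ^ 2 ≤
      g (e3 0 w1 w2) (e3 w1 w2 0) :=
  stmt18_general w1 w2
end
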